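/- arXiv:1703.06639 — 11 statements merged into one kernel-verified Lean document; each statement's English description precedes it below -/
import Mathlib

section
/- Let n ≥ 2 be an integer, 0 < r < R, let H : (r,R) → (0,∞) be continuously differentiable, let ρ : (0,∞) → [0,∞) be continuous, and define h : A(r,R) → ℝ^n by h(x) = H(|x|)·x/|x|. Then ∫_{A(r,R)} ρ(H(|x|))·‖Dh(x)‖^n dx = ω_{n−1} · ∫_r^R ρ(H(t)) · (H'(t)² + (n−1)·H(t)²/t²)^{n/2} · t^{n−1} dt, where ω_{n−1} is the surface measure of the unit sphere S^{n−1} in ℝ^n (both sides taken in [0,+∞]). -/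
/-!
With `t = ‖x‖`, the derivative of `h` at `x` is `(H t / t) • id + ((H' t - H t / t) / t²) • ⟪x, ·⟫ x`,
whose squared Hilbert–Schmidt norm is `H' t ² + (n - 1) H t ² / t²`. The integrand is thus a
function of `‖x‖` alone, and polar coordinates (the Haar measure on `E ∖ {0} ≃ S × (0, ∞)` is
`μ.toSphere ⊗ t^(n-1) dt`) reduce the integral over the annulus to the one over `(r, R)`.
-/

open MeasureTheory Set
open scoped ENNReal RealInnerProductSpace

section Radial

variable {E : Type*} [NormedAddCommGroup E] [InnerProductSpace ℝ E]

theorem hasStrictFDerivAt_norm_of_ne_zero {x : E} (hx : x ≠ 0) :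
    HasStrictFDerivAt (‖·‖) (‖x‖⁻¹ • innerSL ℝ x) x := by
  have hsqrt := (hasStrictFDerivAt_norm_sq x).sqrt (pow_ne_zero 2 (norm_ne_zero_iff.2 hx))
  simp only [Real.sqrt_sq (norm_nonneg _)] at hsqrt
  convert hsqrt using 1
  ext v
  simp only [smul_apply, coe_innerSL_apply, smul_eq_mul, two_smul, add_apply]
  field_simp
  ring

theorem hasFDerivAt_radial {H : ℝ → ℝ} {H'x : ℝ} {x : E} (hx : x ≠ 0)
    (hH : HasDerivAt H H'x ‖x‖) :
    HasFDerivAt (fun y => H ‖y‖ • (‖y‖⁻¹ • y))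
      ((H ‖x‖ / ‖x‖) • ContinuousLinearMap.id ℝ E
        + ((H'x - H ‖x‖ / ‖x‖) / ‖x‖ ^ 2) • (innerSL ℝ x).smulRight x) x := by
  have ht : ‖x‖ ≠ 0 := norm_ne_zero_iff.2 hx
  have hG : HasDerivAt (fun s => H s * s⁻¹) (H'x * ‖x‖⁻¹ + H ‖x‖ * -(‖x‖ ^ 2)⁻¹) ‖x‖ :=
    hH.mul (hasDerivAt_inv ht)
  have := (hG.comp_hasFDerivAt x (hasStrictFDerivAt_norm_of_ne_zero hx).hasFDerivAt).smul
    (hasFDerivAt_id x)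
  convert this using 1
  · funext y
    simp [smul_smul]
  · refine ContinuousLinearMap.ext fun v => ?_
    simp only [add_apply, smul_apply, ContinuousLinearMap.id_apply,
      ContinuousLinearMap.smulRight_apply, coe_innerSL_apply, smul_smul, Function.comp_apply, id]
    congr 2
    rw [smul_eq_mul]
    field_simp
    ring

theorem OrthonormalBasis.sum_norm_sq_smul_id_add_smulRight {ι : Type*} [Fintype ι]
    (b : OrthonormalBasis ι ℝ E) (a c : ℝ) (x : E) :
    ∑ i, ‖(a • ContinuousLinearMap.id ℝ E + c • (innerSL ℝ x).smulRight x) (b i)‖ ^ 2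
      = Fintype.card ι * a ^ 2 + (2 * a * c + c ^ 2 * ‖x‖ ^ 2) * ‖x‖ ^ 2 := by
  have hterm : ∀ i, ‖(a • ContinuousLinearMap.id ℝ E + c • (innerSL ℝ x).smulRight x) (b i)‖ ^ 2
      = a ^ 2 + (2 * a * c + c ^ 2 * ‖x‖ ^ 2) * ⟪b i, x⟫ ^ 2 := by
    intro i
    simp only [add_apply, smul_apply, ContinuousLinearMap.id_apply,
      ContinuousLinearMap.smulRight_apply, coe_innerSL_apply, smul_smul]
    rw [norm_add_sq_real, norm_smul, norm_smul, mul_pow, mul_pow, Real.norm_eq_abs,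
      Real.norm_eq_abs, sq_abs, sq_abs, b.orthonormal.1 i, real_inner_smul_left,
      real_inner_smul_right, real_inner_comm x (b i)]
    ring
  simp only [hterm, Finset.sum_add_distrib, ← Finset.mul_sum, b.sum_sq_inner_right,
    Finset.sum_const, Finset.card_univ, nsmul_eq_mul]

theorem OrthonormalBasis.sum_norm_sq_fderiv_radial {ι : Type*} [Fintype ι]
    (b : OrthonormalBasis ι ℝ E) {H : ℝ → ℝ} {H'x : ℝ} {x : E} (hx : x ≠ 0) (hH : HasDerivAt H H'x ‖x‖) :
    ∑ i, ‖fderiv ℝ (fun y => H ‖y‖ • (‖y‖⁻¹ • y)) x (b i)‖ ^ 2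
      = H'x ^ 2 + ((Fintype.card ι : ℝ) - 1) * H ‖x‖ ^ 2 / ‖x‖ ^ 2 := by
  have ht : ‖x‖ ≠ 0 := norm_ne_zero_iff.2 hx
  rw [(hasFDerivAt_radial hx hH).fderiv, b.sum_norm_sq_smul_id_add_smulRight]
  field_simp
  ring

end Radial

section Polar

variable {E : Type*} [NormedAddCommGroup E] [NormedSpace ℝ E] [Nontrivial E] [MeasurableSpace E]
  [BorelSpace E] [FiniteDimensional ℝ E] (μ : Measure E) [μ.IsAddHaarMeasure]

open Module

theorem lintegral_comp_norm {f : ℝ → ℝ≥0∞} (hf : Measurable f) :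
    ∫⁻ x, f ‖x‖ ∂μ
      = μ.toSphere univ * ∫⁻ t in Ioi 0, ENNReal.ofReal (t ^ (finrank ℝ E - 1)) * f t := by
  have hf' : Measurable fun t : Ioi (0 : ℝ) => f t := hf.comp measurable_subtype_coe
  have hdens : Measurable fun t : Ioi (0 : ℝ) => ENNReal.ofReal (t.1 ^ (finrank ℝ E - 1)) :=
    ENNReal.measurable_ofReal.comp (measurable_subtype_coe.pow_const _)
  calc ∫⁻ x, f ‖x‖ ∂μ = ∫⁻ x : ({0}ᶜ : Set E), f ‖(x : E)‖ ∂μ.comap (↑) := by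
        rw [lintegral_subtype_comap (measurableSet_singleton _).compl (fun x : E => f ‖x‖),
          restrict_compl_singleton]
    _ = ∫⁻ p : Metric.sphere (0 : E) 1 × Ioi (0 : ℝ), f p.2
          ∂μ.toSphere.prod (Measure.volumeIoiPow (finrank ℝ E - 1)) := by
        rw [← μ.measurePreserving_homeomorphUnitSphereProd.lintegral_comp_emb
          (Homeomorph.measurableEmbedding _)]
        simp
    _ = μ.toSphere univ * ∫⁻ t : Ioi (0 : ℝ), f t ∂Measure.volumeIoiPow (finrank ℝ E - 1) := by
        simpa using lintegral_prod_mul (μ := μ.toSphere) (f := fun _ => 1) aemeasurable_const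
          hf'.aemeasurable
    _ = _ := by
        rw [Measure.volumeIoiPow, lintegral_withDensity_eq_lintegral_mul _ hdens hf',
          ← lintegral_subtype_comap measurableSet_Ioi]
        rfl

theorem setLIntegral_preimage_norm {s : Set ℝ} (hs : MeasurableSet s) (hs0 : s ⊆ Ioi 0)
    {f : ℝ → ℝ≥0∞} (hf : Measurable f) :
    ∫⁻ x in (‖·‖) ⁻¹' s, f ‖x‖ ∂μ
      = μ.toSphere univ * ∫⁻ t in s, ENNReal.ofReal (t ^ (finrank ℝ E - 1)) * f t := by
  have hcomp : ∀ x : E, ((‖·‖) ⁻¹' s).indicator (fun x => f ‖x‖) x = s.indicator f ‖x‖ :=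
    fun x => indicator_comp_right (‖·‖)
  rw [← lintegral_indicator (measurable_norm hs)]
  simp only [hcomp, lintegral_comp_norm μ (hf.indicator hs)]
  simp only [← indicator_mul_right s (fun t => ENNReal.ofReal (t ^ (finrank ℝ E - 1))) f]
  rw [lintegral_indicator hs, Measure.restrict_restrict hs, inter_eq_left.2 hs0]

end Polar

theorem stmt1_general (n : ℕ) (hn : 2 ≤ n) (r R : ℝ) (hr : 0 < r)
    (H H' : ℝ → ℝ)
    (hH : ∀ t ∈ Set.Ioo r R, HasDerivAt H (H' t) t)
    (hH'cont : ContinuousOn H' (Set.Ioo r R))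
    (hHpos : ∀ t ∈ Set.Ioo r R, 0 < H t)
    (ρ : ℝ → ℝ) (hρcont : ContinuousOn ρ (Set.Ioi 0))
    (h : EuclideanSpace ℝ (Fin n) → EuclideanSpace ℝ (Fin n))
    (hh : ∀ x : EuclideanSpace ℝ (Fin n), h x = H ‖x‖ • (‖x‖⁻¹ • x)) :
    ∫⁻ x in {x : EuclideanSpace ℝ (Fin n) | r < ‖x‖ ∧ ‖x‖ < R},
        ENNReal.ofReal (ρ (H ‖x‖) *
          (∑ k, ‖fderiv ℝ h x (EuclideanSpace.basisFun (Fin n) ℝ k)‖ ^ 2) ^ ((n : ℝ) / 2))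
      = (volume : Measure (EuclideanSpace ℝ (Fin n))).toSphere Set.univ *
          ∫⁻ t in Set.Ioo r R,
            ENNReal.ofReal (ρ (H t) *
              (H' t ^ 2 + ((n : ℝ) - 1) * (H t) ^ 2 / t ^ 2) ^ ((n : ℝ) / 2) * t ^ (n - 1)) := by
  have : Nontrivial (EuclideanSpace ℝ (Fin n)) :=
    Module.nontrivial_of_finrank_pos (R := ℝ) (by rw [finrank_euclideanSpace_fin]; omega)
  have hIoo : Ioo r R ⊆ Ioi 0 := fun t ht => hr.trans ht.1
  set g : ℝ → ℝ := fun t => ρ (H t) * (H' t ^ 2 + ((n : ℝ) - 1) * H t ^ 2 / t ^ 2) ^ ((n : ℝ) / 2)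
  have hHcont : ContinuousOn H (Ioo r R) := fun t ht => (hH t ht).continuousAt.continuousWithinAt
  have hg : ContinuousOn g (Ioo r R) := by
    refine (hρcont.comp hHcont hHpos).mul (ContinuousOn.rpow_const ?_ fun t _ => ?_)
    · exact (hH'cont.pow 2).add ((continuousOn_const.mul (hHcont.pow 2)).div
        (continuousOn_id.pow 2) fun t ht => pow_ne_zero 2 (hIoo ht).ne')
    · right; positivity
  set F := (Ioo r R).indicator fun t => ENNReal.ofReal (g t) with hF_def
  have hF : Measurable F := by
    rw [hF_def, ← piecewise_eq_indicator]
    exact (ENNReal.continuous_ofReal.comp_continuousOn hg).measurable_piecewise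
      continuousOn_const measurableSet_Ioo
  calc _ = ∫⁻ x in (‖·‖) ⁻¹' Ioo r R, F ‖x‖ := by
        refine setLIntegral_congr_fun (measurable_norm measurableSet_Ioo) fun x hx => ?_
        have hx0 : x ≠ 0 := norm_pos_iff.1 (hIoo hx)
        rw [hF_def, indicator_of_mem (show ‖x‖ ∈ Ioo r R from hx), funext hh,
          (EuclideanSpace.basisFun (Fin n) ℝ).sum_norm_sq_fderiv_radial hx0 (hH _ hx),
          Fintype.card_fin]
    _ = _ := by
        rw [setLIntegral_preimage_norm _ measurableSet_Ioo hIoo hF, finrank_euclideanSpace_fin]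
        refine congrArg _ (setLIntegral_congr_fun measurableSet_Ioo fun t ht => ?_)
        rw [hF_def, indicator_of_mem ht, ← ENNReal.ofReal_mul (pow_nonneg (hIoo ht).le _), mul_comm]

/-- The `(ρ,n)`-energy of the radial map `h(x) = H(|x|) x/|x|` over the
annulus `A(r,R)` equals `ω_{n-1} ∫_r^R ρ(H(t)) (H'(t)² + (n-1)H(t)²/t²)^{n/2} t^{n-1} dt`,
where `ω_{n-1}` is the surface measure of the unit sphere `S^{n-1}` in `ℝⁿ`;
both sides are taken in `[0,+∞]`. -/
theorem stmt1 (n : ℕ) (hn : 2 ≤ n) (r R : ℝ) (hr : 0 < r) (hrR : r < R)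
    (H H' : ℝ → ℝ)
    (hH : ∀ t ∈ Set.Ioo r R, HasDerivAt H (H' t) t)
    (hH'cont : ContinuousOn H' (Set.Ioo r R))
    (hHpos : ∀ t ∈ Set.Ioo r R, 0 < H t)
    (ρ : ℝ → ℝ) (hρcont : ContinuousOn ρ (Set.Ioi 0)) (hρnn : ∀ s ∈ Set.Ioi (0:ℝ), 0 ≤ ρ s)
    (h : EuclideanSpace ℝ (Fin n) → EuclideanSpace ℝ (Fin n))
    (hh : ∀ x : EuclideanSpace ℝ (Fin n), h x = H ‖x‖ • (‖x‖⁻¹ • x)) :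
    ∫⁻ x in {x : EuclideanSpace ℝ (Fin n) | r < ‖x‖ ∧ ‖x‖ < R},
        ENNReal.ofReal (ρ (H ‖x‖) *
          (∑ k, ‖fderiv ℝ h x (EuclideanSpace.basisFun (Fin n) ℝ k)‖ ^ 2) ^ ((n : ℝ) / 2))
      = (volume : Measure (EuclideanSpace ℝ (Fin n))).toSphere Set.univ *
          ∫⁻ t in Set.Ioo r R,
            ENNReal.ofReal (ρ (H t) *
              (H' t ^ 2 + ((n : ℝ) - 1) * (H t) ^ 2 / t ^ 2) ^ ((n : ℝ) / 2) * t ^ (n - 1)) :=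
  stmt1_general n hn r R hr H H' hH hH'cont hHpos ρ hρcont h hh
end

section
/- Let n ≥ 3 be an integer, let ρ : (0,∞) → (0,∞) be continuously differentiable, let R > 1, and let H : [1,R] → (0,∞) be twice continuously differentiable with H'(t) > 0 for all t ∈ [1,R]. Suppose H satisfies on (1,R) the Euler–Lagrange equation of the Lagrangian L(t,H,K) = ρ(H)·t^{n−1}·(K² + (n−1)H²/t²)^{n/2}, namely d/dt[ n·ρ(H(t))·t^{n−1}·H'(t)·(H'(t)² + (n−1)H(t)²/t²)^{(n−2)/2} ] = ρ'(H(t))·t^{n−1}·(H'(t)² + (n−1)H(t)²/t²)^{n/2} + n(n−1)·ρ(H(t))·t^{n−3}·H(t)·(H'(t)² + (n−1)H(t)²/t²)^{(n−2)/2} for all t ∈ (1,R). Then the function t ↦ 𝓛[H](t) is constant on [1,R]. -/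
/-!
The measure `L(t, H, H') dt` is invariant under the rescaling `t ↦ λ t` (with `H` unchanged,
hence `H' ↦ H' / λ`). By Noether's theorem the associated charge `t (L - H' ∂L/∂H')` is
conserved along solutions of the Euler–Lagrange equation, and a direct computation identifies
it with `(n - 1)^{n/2} 𝓛[H]`.
-/

open Set

noncomputable section

namespace RadialLagrangian

variable (n : ℕ) (ρ ρ' : ℝ → ℝ) (t h k : ℝ)

def kinetic : ℝ := k ^ 2 + ((n : ℝ) - 1) * h ^ 2 / t ^ 2

def lagrangian : ℝ := ρ h * t ^ (n - 1) * kinetic n t h k ^ ((n : ℝ) / 2)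

/-- `∂L/∂k`; the Euler–Lagrange equation reads `d/dt momentum = lagrangianPartialH`. -/
def momentum : ℝ :=
  (n : ℝ) * ρ h * t ^ (n - 1) * k * kinetic n t h k ^ (((n : ℝ) - 2) / 2)

def lagrangianPartialH : ℝ :=
  ρ' h * t ^ (n - 1) * kinetic n t h k ^ ((n : ℝ) / 2)
    + (n : ℝ) * ((n : ℝ) - 1) * ρ h * t ^ (n - 3) * h * kinetic n t h k ^ (((n : ℝ) - 2) / 2)

def lagrangianPartialT : ℝ :=
  ((n : ℝ) - 1) * ρ h * t ^ (n - 2) * kinetic n t h k ^ (((n : ℝ) - 2) / 2)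
    * (k ^ 2 - h ^ 2 / t ^ 2)

def noetherCharge : ℝ := t * (lagrangian n ρ t h k - k * momentum n ρ t h k)

def characteristic : ℝ :=
  ρ h * (h ^ 2 - t ^ 2 * k ^ 2) * (h ^ 2 + t ^ 2 * k ^ 2 / ((n : ℝ) - 1)) ^ (((n : ℝ) - 2) / 2)

variable {n ρ ρ' t h k}

lemma kinetic_nonneg (hn : 1 ≤ n) : 0 ≤ kinetic n t h k := by
  have : (0 : ℝ) ≤ (n : ℝ) - 1 := by
    have : (1 : ℝ) ≤ n := by exact_mod_cast hn
    linarith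
  unfold kinetic
  positivity

lemma kinetic_rpow_half (hn : 1 ≤ n) :
    kinetic n t h k ^ ((n : ℝ) / 2)
      = kinetic n t h k ^ (((n : ℝ) - 2) / 2) * kinetic n t h k := by
  have hpos : (0 : ℝ) < n := by exact_mod_cast hn
  rw [← Real.rpow_add_one' (kinetic_nonneg hn) (by linarith)]
  ring_nf

/-- Scale invariance of `L dt` under `t ↦ λ t`, differentiated at `λ = 1`. -/
lemma lagrangian_add_mul_partialT (hn : 2 ≤ n) (ht : t ≠ 0) :
    lagrangian n ρ t h k + t * lagrangianPartialT n ρ t h k = k * momentum n ρ t h k := by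
  have hpow : t ^ (n - 1) = t ^ (n - 2) * t := by rw [← pow_succ]; congr 1; omega
  unfold lagrangian lagrangianPartialT momentum
  rw [kinetic_rpow_half (by omega), hpow]
  unfold kinetic
  field_simp
  ring

lemma noetherCharge_eq (hn : 2 ≤ n) (ht : 0 < t) :
    noetherCharge n ρ t h k = ((n : ℝ) - 1) ^ ((n : ℝ) / 2) * characteristic n ρ t h k := by
  have hn1 : (0 : ℝ) < (n : ℝ) - 1 := by
    have : (2 : ℝ) ≤ n := by exact_mod_cast hn
    linarith
  have hB : 0 ≤ h ^ 2 + t ^ 2 * k ^ 2 / ((n : ℝ) - 1) := by positivity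
  have hscale :
      ((n : ℝ) - 1) * (h ^ 2 + t ^ 2 * k ^ 2 / ((n : ℝ) - 1)) = t ^ 2 * kinetic n t h k := by
    unfold kinetic
    field_simp
    ring
  have ht2 : (t ^ 2) ^ (((n : ℝ) - 2) / 2) = t ^ (n - 2) := by
    rw [← Real.rpow_natCast t 2, ← Real.rpow_mul ht.le, ← Real.rpow_natCast t (n - 2)]
    push_cast [Nat.cast_sub hn]
    ring_nf
  have hfactor : ((n : ℝ) - 1) ^ (((n : ℝ) - 2) / 2)
        * (h ^ 2 + t ^ 2 * k ^ 2 / ((n : ℝ) - 1)) ^ (((n : ℝ) - 2) / 2)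
      = t ^ (n - 2) * kinetic n t h k ^ (((n : ℝ) - 2) / 2) := by
    rw [← Real.mul_rpow hn1.le hB, hscale,
      Real.mul_rpow (by positivity) (kinetic_nonneg (by omega)), ht2]
  have hn1pow : ((n : ℝ) - 1) ^ ((n : ℝ) / 2)
      = ((n : ℝ) - 1) * ((n : ℝ) - 1) ^ (((n : ℝ) - 2) / 2) := by
    rw [mul_comm, ← Real.rpow_add_one hn1.ne']
    ring_nf
  have hpow : t ^ (n - 1) = t ^ (n - 2) * t := by rw [← pow_succ]; congr 1; omega
  unfold noetherCharge characteristic lagrangian momentum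
  rw [kinetic_rpow_half (by omega), hn1pow, hpow]
  calc _ = ((n : ℝ) - 1) * ρ h * (h ^ 2 - t ^ 2 * k ^ 2)
        * (t ^ (n - 2) * kinetic n t h k ^ (((n : ℝ) - 2) / 2)) := by
        unfold kinetic
        field_simp
        ring
    _ = _ := by rw [← hfactor]; ring

variable {H K H' K' : ℝ → ℝ}

lemma hasDerivAt_kinetic_comp (ht : t ≠ 0) (hH : HasDerivAt H (H' t) t)
    (hK : HasDerivAt K (K' t) t) :
    HasDerivAt (fun s => kinetic n s (H s) (K s))
      (2 * K t * K' t + 2 * ((n : ℝ) - 1) * H t * (t * H' t - H t) / t ^ 3) t := by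
  have hquot := ((hH.fun_pow 2).const_mul ((n : ℝ) - 1)).fun_div (hasDerivAt_pow 2 t)
    (pow_ne_zero 2 ht)
  refine ((hK.fun_pow 2).fun_add hquot).congr_deriv ?_
  field_simp
  ring

lemma hasDerivAt_lagrangian_comp (hn : 3 ≤ n) (ht : t ≠ 0)
    (hρ : HasDerivAt ρ (ρ' (H t)) (H t)) (hH : HasDerivAt H (H' t) t)
    (hK : HasDerivAt K (K' t) t) :
    HasDerivAt (fun s => lagrangian n ρ s (H s) (K s))
      (lagrangianPartialT n ρ t (H t) (K t) + lagrangianPartialH n ρ ρ' t (H t) (K t) * H' t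
        + momentum n ρ t (H t) (K t) * K' t) t := by
  have hQ := (hasDerivAt_kinetic_comp (n := n) ht hH hK).rpow_const (p := (n : ℝ) / 2)
    (Or.inr (by rw [le_div_iff₀ two_pos]; exact_mod_cast (by omega : 2 ≤ n)))
  refine (((hρ.comp t hH).fun_mul (hasDerivAt_pow (n - 1) t)).fun_mul hQ).congr_deriv ?_
  have hpow₁ : t ^ (n - 1) = t ^ (n - 3) * t ^ 2 := by rw [← pow_add]; congr 1; omega
  have hpow₂ : t ^ (n - 1 - 1) = t ^ (n - 3) * t := by rw [← pow_succ]; congr 1; omega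
  have hpow₃ : t ^ (n - 2) = t ^ (n - 3) * t := by rw [← pow_succ]; congr 1; omega
  have hexp : (n : ℝ) / 2 - 1 = ((n : ℝ) - 2) / 2 := by ring
  have hcast : ((n - 1 : ℕ) : ℝ) = (n : ℝ) - 1 := by
    push_cast [Nat.cast_sub (by omega : 1 ≤ n)]; ring
  unfold lagrangianPartialT lagrangianPartialH momentum
  rw [kinetic_rpow_half (by omega), hexp, hcast, hpow₁, hpow₂, hpow₃, Function.comp_apply]
  generalize kinetic n t (H t) (K t) ^ (((n : ℝ) - 2) / 2) = q
  unfold kinetic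
  field_simp
  ring

lemma hasDerivAt_noetherCharge_comp {H'' : ℝ → ℝ} (hn : 3 ≤ n) (ht : t ≠ 0)
    (hρ : HasDerivAt ρ (ρ' (H t)) (H t)) (hH : HasDerivAt H (H' t) t)
    (hH' : HasDerivAt H' (H'' t) t)
    (hEL : HasDerivAt (fun s => momentum n ρ s (H s) (H' s))
      (lagrangianPartialH n ρ ρ' t (H t) (H' t)) t) :
    HasDerivAt (fun s => noetherCharge n ρ s (H s) (H' s)) 0 t := by
  have hL := hasDerivAt_lagrangian_comp hn ht hρ hH hH'
  refine ((hasDerivAt_id' t).fun_mul (hL.fun_sub (hH'.fun_mul hEL))).congr_deriv ?_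
  linear_combination
    lagrangian_add_mul_partialT (ρ := ρ) (n := n) (h := H t) (k := H' t) (by omega) ht

lemma continuousOn_noetherCharge_comp {S : Set ℝ} (hn : 2 ≤ n) (hS : ∀ s ∈ S, s ≠ 0)
    (hρH : ContinuousOn (fun s => ρ (H s)) S) (hH : ContinuousOn H S) (hK : ContinuousOn K S) :
    ContinuousOn (fun s => noetherCharge n ρ s (H s) (K s)) S := by
  have hQ : ContinuousOn (fun s => kinetic n s (H s) (K s)) S :=
    (hK.pow 2).add ((continuousOn_const.mul (hH.pow 2)).div (continuousOn_pow 2)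
      fun s hs => pow_ne_zero 2 (hS s hs))
  have hexp : (0 : ℝ) ≤ ((n : ℝ) - 2) / 2 := by
    have : (2 : ℝ) ≤ n := by exact_mod_cast hn
    linarith
  have hQe := hQ.rpow_const (p := ((n : ℝ) - 2) / 2) fun _ _ => Or.inr hexp
  have hQn := hQ.rpow_const (p := (n : ℝ) / 2) fun _ _ => Or.inr (by linarith)
  exact continuousOn_id.mul (((hρH.mul (continuousOn_pow _)).mul hQn).sub
    (hK.mul ((((continuousOn_const.mul hρH).mul (continuousOn_pow _)).mul hK).mul hQe)))

end RadialLagrangian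

lemma constant_of_hasDerivAt_zero_Ioo {f : ℝ → ℝ} {a b : ℝ} (hf : ContinuousOn f (Icc a b))
    (hf' : ∀ x ∈ Ioo a b, HasDerivAt f 0 x) : ∀ x ∈ Icc a b, f x = f a := by
  intro x hx
  rcases hx.1.eq_or_lt with rfl | hax
  · rfl
  obtain ⟨c, -, hslope⟩ := exists_hasDerivAt_eq_slope f (fun _ => 0) hax
    (hf.mono (Icc_subset_Icc_right hx.2)) fun y hy => hf' y ⟨hy.1, hy.2.trans_le hx.2⟩
  rw [eq_comm, div_eq_zero_iff, sub_eq_zero, sub_eq_zero] at hslope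
  exact hslope.resolve_right hax.ne'

open RadialLagrangian

theorem stmt2_general (n : ℕ) (hn : 3 ≤ n) (ρ ρ' : ℝ → ℝ)
    (hρ : ∀ s ∈ Set.Ioi (0:ℝ), HasDerivAt ρ (ρ' s) s)
    (R : ℝ) (H H' H'' : ℝ → ℝ)
    (hH : ∀ t ∈ Set.Icc 1 R, HasDerivWithinAt H (H' t) (Set.Icc 1 R) t)
    (hH' : ∀ t ∈ Set.Icc 1 R, HasDerivWithinAt H' (H'' t) (Set.Icc 1 R) t)
    (hHpos : ∀ t ∈ Set.Icc 1 R, 0 < H t)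
    (hEL : ∀ t ∈ Set.Ioo 1 R,
      HasDerivAt (fun s => (n : ℝ) * ρ (H s) * s ^ (n - 1) * H' s *
          (H' s ^ 2 + ((n : ℝ) - 1) * (H s) ^ 2 / s ^ 2) ^ (((n : ℝ) - 2) / 2))
        (ρ' (H t) * t ^ (n - 1) *
            (H' t ^ 2 + ((n : ℝ) - 1) * (H t) ^ 2 / t ^ 2) ^ ((n : ℝ) / 2)
          + (n : ℝ) * ((n : ℝ) - 1) * ρ (H t) * t ^ (n - 3) * H t *
            (H' t ^ 2 + ((n : ℝ) - 1) * (H t) ^ 2 / t ^ 2) ^ (((n : ℝ) - 2) / 2)) t) :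
    ∃ c : ℝ, ∀ t ∈ Set.Icc 1 R,
      ρ (H t) * ((H t) ^ 2 - t ^ 2 * H' t ^ 2) *
        ((H t) ^ 2 + t ^ 2 * H' t ^ 2 / ((n : ℝ) - 1)) ^ (((n : ℝ) - 2) / 2) = c := by
  have hpos : ∀ t ∈ Icc (1 : ℝ) R, 0 < t := fun t ht => one_pos.trans_le ht.1
  have hHcont : ContinuousOn H (Icc 1 R) := fun t ht => (hH t ht).continuousWithinAt
  have hρH : ContinuousOn (fun s => ρ (H s)) (Icc 1 R) := fun t ht =>
    (hρ _ (hHpos t ht)).continuousAt.comp_continuousWithinAt (hHcont t ht)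
  have hJcont := continuousOn_noetherCharge_comp (n := n) (by omega)
    (fun t ht => (hpos t ht).ne') hρH hHcont fun t ht => (hH' t ht).continuousWithinAt
  have hJ' : ∀ t ∈ Ioo 1 R, HasDerivAt (fun s => noetherCharge n ρ s (H s) (H' s)) 0 t :=
    fun t ht => hasDerivAt_noetherCharge_comp (ρ' := ρ') hn (one_pos.trans ht.1).ne'
      (hρ _ (hHpos t (Ioo_subset_Icc_self ht)))
      ((hH t (Ioo_subset_Icc_self ht)).hasDerivAt (Icc_mem_nhds ht.1 ht.2))
      ((hH' t (Ioo_subset_Icc_self ht)).hasDerivAt (Icc_mem_nhds ht.1 ht.2)) (hEL t ht)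
  have hn1 : (0 : ℝ) < (n : ℝ) - 1 := by
    have : (3 : ℝ) ≤ n := by exact_mod_cast hn
    linarith
  refine ⟨noetherCharge n ρ 1 (H 1) (H' 1) / ((n : ℝ) - 1) ^ ((n : ℝ) / 2), fun t ht => ?_⟩
  rw [eq_div_iff (Real.rpow_pos_of_pos hn1 _).ne',
    ← constant_of_hasDerivAt_zero_Ioo hJcont hJ' t ht, noetherCharge_eq (by omega) (hpos t ht),
    mul_comm]
  rfl

/-- If `H` is a positive `C²` solution on `[1,R]` with `H' > 0` of the
Euler–Lagrange equation of `L(t,H,K) = ρ(H) t^{n-1} (K² + (n-1)H²/t²)^{n/2}`, then the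
characteristic expression
`𝓛[H](t) = ρ(H(t))(H(t)² - t²H'(t)²)(H(t)² + t²H'(t)²/(n-1))^{(n-2)/2}`
is constant on `[1,R]`. -/
theorem stmt2 (n : ℕ) (hn : 3 ≤ n) (ρ ρ' : ℝ → ℝ)
    (hρ : ∀ s ∈ Set.Ioi (0:ℝ), HasDerivAt ρ (ρ' s) s)
    (hρ'cont : ContinuousOn ρ' (Set.Ioi 0))
    (hρpos : ∀ s ∈ Set.Ioi (0:ℝ), 0 < ρ s)
    (R : ℝ) (hR : 1 < R) (H H' H'' : ℝ → ℝ)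
    (hH : ∀ t ∈ Set.Icc 1 R, HasDerivWithinAt H (H' t) (Set.Icc 1 R) t)
    (hH' : ∀ t ∈ Set.Icc 1 R, HasDerivWithinAt H' (H'' t) (Set.Icc 1 R) t)
    (hH'cont : ContinuousOn H' (Set.Icc 1 R))
    (hH''cont : ContinuousOn H'' (Set.Icc 1 R))
    (hHpos : ∀ t ∈ Set.Icc 1 R, 0 < H t)
    (hH'pos : ∀ t ∈ Set.Icc 1 R, 0 < H' t)
    (hEL : ∀ t ∈ Set.Ioo 1 R,
      HasDerivAt (fun s => (n : ℝ) * ρ (H s) * s ^ (n - 1) * H' s *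
          (H' s ^ 2 + ((n : ℝ) - 1) * (H s) ^ 2 / s ^ 2) ^ (((n : ℝ) - 2) / 2))
        (ρ' (H t) * t ^ (n - 1) *
            (H' t ^ 2 + ((n : ℝ) - 1) * (H t) ^ 2 / t ^ 2) ^ ((n : ℝ) / 2)
          + (n : ℝ) * ((n : ℝ) - 1) * ρ (H t) * t ^ (n - 3) * H t *
            (H' t ^ 2 + ((n : ℝ) - 1) * (H t) ^ 2 / t ^ 2) ^ (((n : ℝ) - 2) / 2)) t) :
    ∃ c : ℝ, ∀ t ∈ Set.Icc 1 R,
      ρ (H t) * ((H t) ^ 2 - t ^ 2 * H' t ^ 2) *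
        ((H t) ^ 2 + t ^ 2 * H' t ^ 2 / ((n : ℝ) - 1)) ^ (((n : ℝ) - 2) / 2) = c :=
  stmt2_general n hn ρ ρ' hρ R H H' H'' hH hH' hHpos hEL
end
end

section
/- Let n ≥ 3 be an integer, R > 1, R_* > 1, and let ρ be a regular metric on [1,R_*]. Suppose H : [1,R] → [1,R_*] is continuously differentiable with H(1) = 1 and H'(t) ≥ 0 for all t, and suppose there is a constant c ∈ ℝ with 𝓛[H](t) = c for all t ∈ [1,R]. Then c ≤ ρ(1). -/
/-!
At `t = 1` we have `H = 1`, so `𝓛[H](1) = ρ(1) (1 - x) (1 + x/(n-1))^{(n-2)/2}` with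
`x = H'(1)² ≥ 0`. Bounding `1 - x ≤ e^{-x}` and `1 + x/(n-1) ≤ e^{x/(n-1)}` shows that the
factor after `ρ(1)` is at most `e^{-x n / (2(n-1))} ≤ 1`.
-/

open Real

/-- A `C¹` function `ρ : [1,R₁] → (0,∞)` is a *regular metric* if `s ↦ ρ(s)sⁿ`
is nondecreasing on `[1,R₁]` (so its minimum is `ρ(1)`). -/
def IsRegularMetric (n : ℕ) (R₁ : ℝ) (ρ : ℝ → ℝ) : Prop :=
  ContDiffOn ℝ 1 ρ (Set.Icc 1 R₁) ∧ (∀ s ∈ Set.Icc 1 R₁, 0 < ρ s) ∧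
    MonotoneOn (fun s => ρ s * s ^ n) (Set.Icc 1 R₁)

lemma one_sub_mul_one_add_div_rpow_le_one {m x : ℝ} (hm : 2 ≤ m) (hx : 0 ≤ x) :
    (1 - x) * (1 + x / (m - 1)) ^ ((m - 2) / 2) ≤ 1 := by
  have hy : 0 ≤ x / (m - 1) := div_nonneg hx (by linarith)
  rcases le_or_gt x 1 with hx1 | hx1
  · have hexponent : x / (m - 1) * ((m - 2) / 2) ≤ x :=
      calc x / (m - 1) * ((m - 2) / 2) ≤ x / (m - 1) * (m - 1) := by gcongr; linarith
        _ = x := div_mul_cancel₀ x (by linarith)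
    calc (1 - x) * (1 + x / (m - 1)) ^ ((m - 2) / 2)
        ≤ exp (-x) * exp (x / (m - 1)) ^ ((m - 2) / 2) := by
          have h1 := add_one_le_exp (-x)
          have h2 := add_one_le_exp (x / (m - 1))
          gcongr <;> linarith
      _ = exp (-x + x / (m - 1) * ((m - 2) / 2)) := by rw [← exp_mul, ← exp_add]
      _ ≤ 1 := exp_le_one_iff.2 (by linarith)
  · have hpos : 0 ≤ (1 + x / (m - 1)) ^ ((m - 2) / 2) := rpow_nonneg (by linarith) _
    nlinarith

theorem stmt4_general (n : ℕ) (hn : 3 ≤ n) (R Rs : ℝ) (hR : 1 < R) (hRs : 1 < Rs)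
    (ρ : ℝ → ℝ) (hρ : IsRegularMetric n Rs ρ)
    (H H' : ℝ → ℝ)
    (hH1 : H 1 = 1)
    (c : ℝ)
    (hc : ∀ t ∈ Set.Icc 1 R,
      ρ (H t) * ((H t) ^ 2 - t ^ 2 * H' t ^ 2) *
        ((H t) ^ 2 + t ^ 2 * H' t ^ 2 / ((n : ℝ) - 1)) ^ (((n : ℝ) - 2) / 2) = c) :
    c ≤ ρ 1 := by
  have hc1 := hc 1 ⟨le_rfl, hR.le⟩
  simp only [hH1, one_pow, one_mul] at hc1
  have hρ1 : 0 ≤ ρ 1 := (hρ.2.1 1 ⟨le_rfl, hRs.le⟩).le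
  have hn2 : (2 : ℝ) ≤ n := by exact_mod_cast (by omega : 2 ≤ n)
  rw [← hc1, mul_assoc]
  exact mul_le_of_le_one_right hρ1
    (one_sub_mul_one_add_div_rpow_le_one hn2 (sq_nonneg (H' 1)))

/-- If `H : [1,R] → [1,R_*]` is `C¹` with `H(1) = 1`, `H' ≥ 0`, and the
characteristic expression `𝓛[H]` is constantly equal to `c`, then `c ≤ ρ(1)`
(the generalized Nitsche inequality). -/
theorem stmt4 (n : ℕ) (hn : 3 ≤ n) (R Rs : ℝ) (hR : 1 < R) (hRs : 1 < Rs)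
    (ρ : ℝ → ℝ) (hρ : IsRegularMetric n Rs ρ)
    (H H' : ℝ → ℝ)
    (hmap : ∀ t ∈ Set.Icc 1 R, H t ∈ Set.Icc 1 Rs)
    (hH : ∀ t ∈ Set.Icc 1 R, HasDerivWithinAt H (H' t) (Set.Icc 1 R) t)
    (hH'cont : ContinuousOn H' (Set.Icc 1 R))
    (hH1 : H 1 = 1) (hH'nn : ∀ t ∈ Set.Icc 1 R, 0 ≤ H' t)
    (c : ℝ)
    (hc : ∀ t ∈ Set.Icc 1 R,
      ρ (H t) * ((H t) ^ 2 - t ^ 2 * H' t ^ 2) *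
        ((H t) ^ 2 + t ^ 2 * H' t ^ 2 / ((n : ℝ) - 1)) ^ (((n : ℝ) - 2) / 2) = c) :
    c ≤ ρ 1 :=
  stmt4_general n hn R Rs hR hRs ρ hρ H H' hH1 c hc
end

section
/- Let n ≥ 3 be an integer, R_* > 1, let ρ be a regular metric on [1,R_*], and let c be a real number with 0 ≤ c ≤ ρ(1). Then for every t ∈ [1,R_*] there exists exactly one η ∈ [0,1] satisfying (1 + η²/(n−1))^{(n−2)/2}·(1 − η²) = c/(ρ(t)·t^n). -/
open Set

noncomputable def etaProfile (m p η : ℝ) : ℝ := (1 + η ^ 2 / m) ^ p * (1 - η ^ 2)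

lemma StrictAntiOn.existsUnique_eq_of_mem_Icc {α δ : Type*} [ConditionallyCompleteLinearOrder α]
    [TopologicalSpace α] [OrderTopology α] [DenselyOrdered α] [LinearOrder δ] [TopologicalSpace δ]
    [OrderClosedTopology δ] {f : α → δ} {a b : α} {d : δ} (hab : a ≤ b)
    (hf : ContinuousOn f (Icc a b)) (hanti : StrictAntiOn f (Icc a b)) (hd : d ∈ Icc (f b) (f a)) :
    ∃! x, x ∈ Icc a b ∧ f x = d := by
  obtain ⟨x, hx, hfx⟩ := intermediate_value_Icc' hab hf hd
  exact ⟨x, ⟨hx, hfx⟩, fun y ⟨hy, hfy⟩ => hanti.injOn hy hx (hfy.trans hfx.symm)⟩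

namespace etaProfile

variable {m p : ℝ}

lemma one_le_base (hm : 0 < m) (η : ℝ) : 1 ≤ 1 + η ^ 2 / m :=
  le_add_of_nonneg_right (by positivity)

lemma continuous (hm : 0 < m) : Continuous (etaProfile m p) :=
  (Continuous.rpow_const (f := fun η : ℝ => 1 + η ^ 2 / m) (by fun_prop)
    fun η => Or.inl (by linarith [one_le_base hm η])).mul (by fun_prop)

lemma hasDerivAt (hm : 0 < m) (η : ℝ) :
    HasDerivAt (etaProfile m p)
      (2 * η * (1 + η ^ 2 / m) ^ (p - 1) * (p * (1 - η ^ 2) / m - (1 + η ^ 2 / m))) η := by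
  set B := 1 + η ^ 2 / m
  have hB : B ≠ 0 := by linarith [one_le_base hm η]
  have hbase : HasDerivAt (fun x : ℝ => 1 + x ^ 2 / m) (2 * η / m) η := by
    simpa using ((hasDerivAt_pow 2 η).div_const m).const_add 1
  have hfac : HasDerivAt (fun x : ℝ => 1 - x ^ 2) (-(2 * η)) η := by
    simpa using (hasDerivAt_pow 2 η).const_sub 1
  refine ((hbase.rpow_const (p := p) (Or.inl hB)).mul hfac).congr_deriv ?_
  rw [show B ^ p = B ^ (p - 1) * B by rw [← Real.rpow_add_one hB]; ring_nf]
  ring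

lemma strictAntiOn (hm : 0 < m) (hpm : p ≤ m) : StrictAntiOn (etaProfile m p) (Icc 0 1) := by
  refine strictAntiOn_of_deriv_neg (convex_Icc 0 1) (continuous hm).continuousOn fun η hη => ?_
  rw [interior_Icc] at hη
  obtain ⟨hη0, hη1⟩ := hη
  rw [(hasDerivAt hm η).deriv]
  have hB := one_le_base hm η
  have hlt : p * (1 - η ^ 2) / m < 1 + η ^ 2 / m := by
    rw [div_lt_iff₀ hm, add_mul, div_mul_cancel₀ _ hm.ne']
    nlinarith [mul_pos hη0 hη0, mul_pos hη0 (sub_pos.2 hη1)]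
  have hpow : 0 < (1 + η ^ 2 / m) ^ (p - 1) := Real.rpow_pos_of_pos (by linarith) _
  exact mul_neg_of_pos_of_neg (by positivity) (by linarith)

lemma existsUnique_eq (hm : 0 < m) (hpm : p ≤ m) {d : ℝ} (hd : d ∈ Icc (0 : ℝ) 1) :
    ∃! η, η ∈ Icc (0 : ℝ) 1 ∧ etaProfile m p η = d :=
  (strictAntiOn hm hpm).existsUnique_eq_of_mem_Icc zero_le_one (continuous hm).continuousOn
    (by simpa [etaProfile] using hd)

end etaProfile

lemma IsRegularMetric.le_mul_pow {n : ℕ} {R : ℝ} {ρ : ℝ → ℝ} (hρ : IsRegularMetric n R ρ)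
    {t : ℝ} (ht : t ∈ Icc 1 R) : ρ 1 ≤ ρ t * t ^ n := by
  simpa using hρ.2.2 (left_mem_Icc.2 (ht.1.trans ht.2)) ht ht.1

theorem stmt6_general (n : ℕ) (hn : 3 ≤ n) (Rs : ℝ)
    (ρ : ℝ → ℝ) (hρ : IsRegularMetric n Rs ρ)
    (c : ℝ) (hc0 : 0 ≤ c) (hc1 : c ≤ ρ 1) :
    ∀ t ∈ Set.Icc 1 Rs, ∃! η : ℝ, η ∈ Set.Icc (0:ℝ) 1 ∧
      (1 + η ^ 2 / ((n : ℝ) - 1)) ^ (((n : ℝ) - 2) / 2) * (1 - η ^ 2)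
        = c / (ρ t * t ^ n) := by
  intro t ht
  have hn' : (3 : ℝ) ≤ n := by exact_mod_cast hn
  have hden : 0 < ρ t * t ^ n := mul_pos (hρ.2.1 t ht) (pow_pos (by linarith [ht.1]) n)
  have hquot : c / (ρ t * t ^ n) ∈ Icc (0 : ℝ) 1 :=
    ⟨div_nonneg hc0 hden.le, (div_le_one hden).2 (hc1.trans (hρ.le_mul_pow ht))⟩
  exact etaProfile.existsUnique_eq (by linarith) (by linarith) hquot

/-- For a regular metric `ρ` on `[1,R_*]` and `0 ≤ c ≤ ρ(1)`, for every
`t ∈ [1,R_*]` there is exactly one `η ∈ [0,1]` with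
`(1 + η²/(n-1))^{(n-2)/2} (1 - η²) = c/(ρ(t)tⁿ)`. -/
theorem stmt6 (n : ℕ) (hn : 3 ≤ n) (Rs : ℝ) (hRs : 1 < Rs)
    (ρ : ℝ → ℝ) (hρ : IsRegularMetric n Rs ρ)
    (c : ℝ) (hc0 : 0 ≤ c) (hc1 : c ≤ ρ 1) :
    ∀ t ∈ Set.Icc 1 Rs, ∃! η : ℝ, η ∈ Set.Icc (0:ℝ) 1 ∧
      (1 + η ^ 2 / ((n : ℝ) - 1)) ^ (((n : ℝ) - 2) / 2) * (1 - η ^ 2)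
        = c / (ρ t * t ^ n) :=
  stmt6_general n hn Rs ρ hρ c hc0 hc1
end

section
/- Let n ≥ 3 be an integer, R > 1, R_* > 1, let ρ be a regular metric on [1,R_*], and let c ∈ ℝ. Suppose H : [1,R] → [1,R_*] is continuously differentiable with H(1) = 1 and H'(t) > 0 for all t ∈ [1,R], and 𝓛[H](t) = c for all t ∈ [1,R]. Then for every t ∈ [1,R], log t = ∫_1^{H(t)} dy / ( y·√( Ψ( c/(y^n·ρ(y)) ) ) ). -/
open Set MeasureTheory intervalIntegral

noncomputable def Phi (n : ℕ) (ζ : ℝ) : ℝ :=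
  (1 - ζ) * (1 + ζ / ((n : ℝ) - 1)) ^ (((n : ℝ) - 2) / 2)

section Phi

variable {n : ℕ}

lemma hasDerivAt_Phi (hn : 2 ≤ n) {x : ℝ} (hx : 0 < 1 + x / ((n : ℝ) - 1)) :
    HasDerivAt (Phi n)
      (-(n * (1 + x)) / (2 * ((n : ℝ) - 1)) *
        (1 + x / ((n : ℝ) - 1)) ^ (((n : ℝ) - 2) / 2 - 1)) x := by
  have hn1 : (0 : ℝ) < (n : ℝ) - 1 := by
    have : (2 : ℝ) ≤ n := by exact_mod_cast hn
    linarith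
  have hbase : HasDerivAt (fun y : ℝ => 1 + y / ((n : ℝ) - 1)) (1 / ((n : ℝ) - 1)) x := by
    simpa using ((hasDerivAt_id x).div_const ((n : ℝ) - 1)).const_add 1
  have hlin : HasDerivAt (fun y : ℝ => 1 - y) (-1) x := by
    simpa using (hasDerivAt_id x).const_sub 1
  refine (hlin.mul (hbase.rpow_const (p := ((n : ℝ) - 2) / 2) (Or.inl hx.ne'))).congr_deriv ?_
  have hsplit := Real.rpow_add_one hx.ne' (((n : ℝ) - 2) / 2 - 1)
  rw [sub_add_cancel] at hsplit
  rw [hsplit]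
  generalize (1 + x / ((n : ℝ) - 1)) ^ (((n : ℝ) - 2) / 2 - 1) = P
  field_simp
  ring

lemma Phi_strictAntiOn (hn : 2 ≤ n) : StrictAntiOn (Phi n) (Ici 0) := by
  have hn1 : (0 : ℝ) < (n : ℝ) - 1 := by
    have : (2 : ℝ) ≤ n := by exact_mod_cast hn
    linarith
  have hbase {x : ℝ} (hx : 0 ≤ x) : 0 < 1 + x / ((n : ℝ) - 1) := by positivity
  refine strictAntiOn_of_hasDerivWithinAt_neg (convex_Ici 0)
    (fun x hx => (hasDerivAt_Phi hn (hbase hx)).continuousAt.continuousWithinAt)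
    (fun x hx => (hasDerivAt_Phi hn (hbase (interior_subset hx))).hasDerivWithinAt)
    (fun x hx => ?_)
  rw [interior_Ici, mem_Ioi] at hx
  have hpow := Real.rpow_pos_of_pos (hbase hx.le) (((n : ℝ) - 2) / 2 - 1)
  have hcoef : -(n * (1 + x)) / (2 * ((n : ℝ) - 1)) < 0 :=
    div_neg_of_neg_of_pos (by nlinarith) (by positivity)
  exact mul_neg_of_neg_of_pos hcoef hpow

lemma leftInvOn_Phi (hn : 2 ≤ n) {Ψ : ℝ → ℝ} (hΨ : ∀ ζ ≤ (1 : ℝ), 0 ≤ Ψ ζ ∧ Phi n (Ψ ζ) = ζ) :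
    LeftInvOn Ψ (Phi n) (Ici 0) := by
  intro x hx
  have hanti := Phi_strictAntiOn hn
  have hle : Phi n x ≤ 1 := by
    simpa [Phi] using hanti.antitoneOn (mem_Ici.2 le_rfl) hx hx
  obtain ⟨hΨ₀, hΦΨ⟩ := hΨ _ hle
  exact hanti.injOn hΨ₀ hx hΦΨ

lemma sq_sub_mul_rpow_eq_pow_mul_Phi (hn : 1 ≤ n) {h : ℝ} (hh : 0 < h) (x : ℝ) :
    (h ^ 2 - x ^ 2) * (h ^ 2 + x ^ 2 / ((n : ℝ) - 1)) ^ (((n : ℝ) - 2) / 2) =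
      h ^ n * Phi n ((x / h) ^ 2) := by
  have hn1 : (0 : ℝ) ≤ (n : ℝ) - 1 := by
    have : (1 : ℝ) ≤ n := by exact_mod_cast hn
    linarith
  have hfactor : h ^ 2 + x ^ 2 / ((n : ℝ) - 1) = h ^ 2 * (1 + (x / h) ^ 2 / ((n : ℝ) - 1)) := by
    field_simp
  have hpow : h ^ 2 * (h ^ 2) ^ (((n : ℝ) - 2) / 2) = h ^ n := by
    rw [← Real.rpow_natCast h n, ← Real.rpow_natCast h 2, ← Real.rpow_mul hh.le,
      ← Real.rpow_add hh]
    push_cast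
    ring_nf
  rw [hfactor, Real.mul_rpow (by positivity) (by positivity), ← hpow, Phi]
  field_simp

lemma sqrt_Psi_eq_div (hn : 2 ≤ n) {Ψ : ℝ → ℝ}
    (hΨ : ∀ ζ ≤ (1 : ℝ), 0 ≤ Ψ ζ ∧ Phi n (Ψ ζ) = ζ) {r h x c : ℝ} (hr : 0 < r) (hh : 0 < h)
    (hx : 0 ≤ x)
    (hc : r * (h ^ 2 - x ^ 2) * (h ^ 2 + x ^ 2 / ((n : ℝ) - 1)) ^ (((n : ℝ) - 2) / 2) = c) :
    √(Ψ (c / (h ^ n * r))) = x / h := by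
  have hΦ : c / (h ^ n * r) = Phi n ((x / h) ^ 2) := by
    rw [← hc, mul_assoc, sq_sub_mul_rpow_eq_pow_mul_Phi (by omega) hh]
    field_simp
  rw [hΦ, leftInvOn_Phi hn hΨ (mem_Ici.2 (sq_nonneg _)), Real.sqrt_sq (by positivity)]

end Phi

lemma setIntegral_Icc_eq_log_of_deriv_mul_comp_eq_inv {f f' g : ℝ → ℝ} {a b : ℝ} (ha : 0 < a)
    (hab : a ≤ b) (hf : ContinuousOn f (Icc a b)) (hff' : ∀ x ∈ Ioo a b, HasDerivAt f (f' x) x)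
    (hf' : ∀ x ∈ Ioo a b, 0 ≤ f' x) (hg : ∀ x ∈ Icc a b, f' x * g (f x) = 1 / x) :
    ∫ y in Icc (f a) (f b), g y = Real.log (b / a) := by
  rw [← integral_Icc_deriv_smul_of_deriv_nonneg hf hff' hf' hab]
  simp only [smul_eq_mul]
  rw [setIntegral_congr_fun measurableSet_Icc hg, integral_Icc_eq_integral_Ioc,
    ← integral_of_le hab, integral_one_div_of_pos ha (ha.trans_le hab)]

theorem stmt7_general (n : ℕ) (hn : 3 ≤ n) (R Rs : ℝ)
    (ρ : ℝ → ℝ) (hρ : IsRegularMetric n Rs ρ) (c : ℝ)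
    (Ψ : ℝ → ℝ)
    (hΨ : ∀ ζ ≤ (1:ℝ), 0 ≤ Ψ ζ ∧
      (1 - Ψ ζ) * (1 + Ψ ζ / ((n : ℝ) - 1)) ^ (((n : ℝ) - 2) / 2) = ζ)
    (H H' : ℝ → ℝ)
    (hmap : ∀ t ∈ Set.Icc 1 R, H t ∈ Set.Icc 1 Rs)
    (hH : ∀ t ∈ Set.Icc 1 R, HasDerivWithinAt H (H' t) (Set.Icc 1 R) t)
    (hH1 : H 1 = 1) (hH'pos : ∀ t ∈ Set.Icc 1 R, 0 < H' t)
    (hc : ∀ t ∈ Set.Icc 1 R,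
      ρ (H t) * ((H t) ^ 2 - t ^ 2 * H' t ^ 2) *
        ((H t) ^ 2 + t ^ 2 * H' t ^ 2 / ((n : ℝ) - 1)) ^ (((n : ℝ) - 2) / 2) = c) :
    ∀ t ∈ Set.Icc 1 R,
      Real.log t = ∫ y in (1:ℝ)..(H t), 1 / (y * Real.sqrt (Ψ (c / (y ^ n * ρ y)))) := by
  intro t ht
  have hsub : Icc 1 t ⊆ Icc 1 R := Icc_subset_Icc_right ht.2
  have hpullback : ∀ s ∈ Icc 1 t,
      H' s * (1 / (H s * √(Ψ (c / (H s ^ n * ρ (H s)))))) = 1 / s := by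
    intro s hs
    have hs0 : 0 < s := one_pos.trans_le hs.1
    have hH's := hH'pos s (hsub hs)
    have hHs : 0 < H s := one_pos.trans_le (hmap s (hsub hs)).1
    rw [sqrt_Psi_eq_div (by omega) hΨ (hρ.2.1 _ (hmap s (hsub hs))) hHs (x := s * H' s)
      (by positivity) (by rw [mul_pow]; exact hc s (hsub hs))]
    field_simp
  have hlog := setIntegral_Icc_eq_log_of_deriv_mul_comp_eq_inv
    (g := fun y => 1 / (y * √(Ψ (c / (y ^ n * ρ y))))) one_pos ht.1
    (fun s hs => (hH s (hsub hs)).continuousWithinAt.mono hsub)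
    (fun s hs => (hH s (hsub (Ioo_subset_Icc_self hs))).hasDerivAt
      (Icc_mem_nhds hs.1 (hs.2.trans_le ht.2)))
    (fun s hs => (hH'pos s (hsub (Ioo_subset_Icc_self hs))).le) hpullback
  rw [hH1, div_one, integral_Icc_eq_integral_Ioc, ← integral_of_le (hmap t ht).1] at hlog
  exact hlog.symm

/-- If `H : [1,R] → [1,R_*]` is `C¹` with `H(1) = 1`, `H' > 0` and
`𝓛[H] ≡ c`, then `log t = ∫_1^{H(t)} dy/(y √(Ψ(c/(yⁿ ρ(y)))))`, where `Ψ` is the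
inverse of `Φ(ζ) = (1 - ζ)(1 + ζ/(n-1))^{(n-2)/2}`. -/
theorem stmt7 (n : ℕ) (hn : 3 ≤ n) (R Rs : ℝ) (hR : 1 < R) (hRs : 1 < Rs)
    (ρ : ℝ → ℝ) (hρ : IsRegularMetric n Rs ρ) (c : ℝ)
    (Ψ : ℝ → ℝ)
    (hΨ : ∀ ζ ≤ (1:ℝ), 0 ≤ Ψ ζ ∧
      (1 - Ψ ζ) * (1 + Ψ ζ / ((n : ℝ) - 1)) ^ (((n : ℝ) - 2) / 2) = ζ)
    (H H' : ℝ → ℝ)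
    (hmap : ∀ t ∈ Set.Icc 1 R, H t ∈ Set.Icc 1 Rs)
    (hH : ∀ t ∈ Set.Icc 1 R, HasDerivWithinAt H (H' t) (Set.Icc 1 R) t)
    (hH'cont : ContinuousOn H' (Set.Icc 1 R))
    (hH1 : H 1 = 1) (hH'pos : ∀ t ∈ Set.Icc 1 R, 0 < H' t)
    (hc : ∀ t ∈ Set.Icc 1 R,
      ρ (H t) * ((H t) ^ 2 - t ^ 2 * H' t ^ 2) *
        ((H t) ^ 2 + t ^ 2 * H' t ^ 2 / ((n : ℝ) - 1)) ^ (((n : ℝ) - 2) / 2) = c) :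
    ∀ t ∈ Set.Icc 1 R,
      Real.log t = ∫ y in (1:ℝ)..(H t), 1 / (y * Real.sqrt (Ψ (c / (y ^ n * ρ y)))) :=
  stmt7_general n hn R Rs ρ hρ c Ψ hΨ H H' hmap hH hH1 hH'pos hc
end

section
/- For every integer n ≥ 4 there exists exactly one real number κ in the interval [1, √((n−1)/(n−3))] satisfying (n−1+κ²)^{(n−2)/2}·(κ²−1) = κ^n. -/
/-- For every integer `n ≥ 4` there is exactly one `κ` in the interval
`[1, √((n-1)/(n-3))]` with `(n - 1 + κ²)^{(n-2)/2} (κ² - 1) = κⁿ`. -/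
theorem stmt10 (n : ℕ) (hn : 4 ≤ n) :
    ∃! κ : ℝ, κ ∈ Set.Icc 1 (Real.sqrt (((n : ℝ) - 1) / ((n : ℝ) - 3))) ∧
      ((n : ℝ) - 1 + κ ^ 2) ^ (((n : ℝ) - 2) / 2) * (κ ^ 2 - 1) = κ ^ n := by
  set N : ℝ := (n : ℝ) with hNdef
  have hN4 : (4:ℝ) ≤ N := by rw [hNdef]; exact_mod_cast hn
  set T : ℝ := (N - 1) / (N - 3) with hTdef
  have hN3 : (0:ℝ) < N - 3 := by linarith
  have hT1 : 1 < T := by rw [hTdef, lt_div_iff₀ hN3]; linarith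
  have hT0 : 0 < T := lt_trans one_pos hT1
  set R : ℝ := Real.sqrt T with hRdef
  have hR2 : R ^ 2 = T := Real.sq_sqrt hT0.le
  have hRnn : 0 ≤ R := Real.sqrt_nonneg T
  have hR1 : 1 < R := by nlinarith
  set a : ℝ := (N - 2) / 2 with hadef
  set G : ℝ → ℝ := fun κ => (N - 1 + κ ^ 2) ^ a * (κ ^ 2 - 1) * κ ^ (-N) with hGdef
  have hApos : ∀ x : ℝ, 0 < N - 1 + x ^ 2 := by
    intro x; nlinarith [sq_nonneg x]
  -- continuity
  have hcont : ContinuousOn G (Set.Icc 1 R) := by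
    apply ContinuousOn.mul
    · apply ContinuousOn.mul
      · exact ((continuous_const.add (continuous_pow 2)).continuousOn).rpow_const
          (fun x _ => Or.inl (hApos x).ne')
      · exact ((continuous_pow 2).sub continuous_const).continuousOn
    · exact continuousOn_id.rpow_const (fun x hx => Or.inl (by
        have : (1:ℝ) ≤ x := hx.1
        positivity))
  -- derivative positive on interior
  have hmono : StrictMonoOn G (Set.Icc 1 R) := by
    apply strictMonoOn_of_deriv_pos (convex_Icc 1 R) hcont
    intro x hx
    rw [interior_Icc] at hx
    have hx1 : 1 < x := hx.1
    have hx0 : (0:ℝ) < x := lt_trans one_pos hx1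
    have hA0 : (N - 1 + x ^ 2) ≠ 0 := (hApos x).ne'
    have hA : HasDerivAt (fun y : ℝ => N - 1 + y ^ 2) (2 * x) x := by
      simpa using (hasDerivAt_pow 2 x).const_add (N - 1)
    have hP := hA.rpow_const (p := a) (Or.inl hA0)
    have hB : HasDerivAt (fun y : ℝ => y ^ 2 - 1) (2 * x) x := by
      simpa using (hasDerivAt_pow 2 x).sub_const 1
    have hC : HasDerivAt (fun y : ℝ => y ^ (-N)) ((-N) * x ^ (-N - 1)) x := by
      simpa using Real.hasDerivAt_rpow_const (p := -N) (Or.inl hx0.ne')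
    have hG' : HasDerivAt G
        ((2 * x * a * (N - 1 + x ^ 2) ^ (a - 1) * (x ^ 2 - 1)
          + (N - 1 + x ^ 2) ^ a * (2 * x)) * x ^ (-N)
          + (N - 1 + x ^ 2) ^ a * (x ^ 2 - 1) * ((-N) * x ^ (-N - 1))) x :=
      (hP.mul hB).mul hC
    rw [hG'.deriv]
    have hkey : 0 < (N - 1 + x ^ 2) ^ (a - 1) * x ^ (-N - 1)
        * (N * ((N - 1) - (N - 3) * x ^ 2)) := by
      have h1 : 0 < (N - 1 + x ^ 2) ^ (a - 1) := Real.rpow_pos_of_pos (hApos x) _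
      have h2 : 0 < x ^ (-N - 1) := Real.rpow_pos_of_pos hx0 _
      have hxT : x ^ 2 < T := by
        rw [← hR2]
        exact pow_lt_pow_left₀ hx.2 hx0.le (by norm_num)
      have h3 : 0 < N * ((N - 1) - (N - 3) * x ^ 2) := by
        have h4 : (N - 3) * x ^ 2 < (N - 3) * T := mul_lt_mul_of_pos_left hxT hN3
        have hTN : (N - 3) * T = N - 1 := by rw [hTdef]; field_simp
        nlinarith
      positivity
    have hAa : (N - 1 + x ^ 2) ^ a = (N - 1 + x ^ 2) ^ (a - 1) * (N - 1 + x ^ 2) := by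
      rw [← Real.rpow_add_one hA0]; norm_num
    have hxa : x ^ (-N) = x ^ (-N - 1) * x := by
      rw [← Real.rpow_add_one hx0.ne']; norm_num
    refine lt_of_lt_of_eq hkey ?_
    rw [hAa, hxa, hadef]; ring
  -- endpoint values
  have hG1 : G 1 = 0 := by norm_num [hGdef]
  have hGR : 1 ≤ G R := by
    have hRN : R ^ (-N) = T ^ (-N / 2) := by
      rw [hRdef, Real.sqrt_eq_rpow, ← Real.rpow_mul hT0.le]
      congr 1; ring
    have hAT : N - 1 + R ^ 2 = (N - 2) * T := by
      rw [hR2, hTdef]; field_simp; ring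
    have hTa : T ^ a * T ^ (-N / 2) = T⁻¹ := by
      rw [← Real.rpow_add hT0, hadef]
      rw [show (N - 2) / 2 + -N / 2 = -1 by ring, Real.rpow_neg_one]
    have hT2 : (T - 1) * T⁻¹ = 2 / (N - 1) := by
      rw [hTdef, inv_div]
      field_simp
      ring
    have hGReq : G R = (N - 2) ^ a * (2 / (N - 1)) := by
      calc G R = (N - 2) ^ a * T ^ a * (T - 1) * T ^ (-N / 2) := by
            simp only [hGdef]
            rw [hAT, Real.mul_rpow (by linarith) hT0.le, hR2, hRN]
        _ = (N - 2) ^ a * ((T - 1) * (T ^ a * T ^ (-N / 2))) := by ring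
        _ = (N - 2) ^ a * ((T - 1) * T⁻¹) := by rw [hTa]
        _ = (N - 2) ^ a * (2 / (N - 1)) := by rw [hT2]
    have hX : N - 2 ≤ (N - 2) ^ a := by
      calc N - 2 = (N - 2) ^ (1:ℝ) := (Real.rpow_one _).symm
        _ ≤ (N - 2) ^ a :=
          Real.rpow_le_rpow_of_exponent_le (by linarith) (by rw [hadef]; linarith)
    have h2 : 1 ≤ (N - 2) * (2 / (N - 1)) := by
      rw [show (N - 2) * (2 / (N - 1)) = (2 * N - 4) / (N - 1) by ring,
        le_div_iff₀ (by linarith : (0:ℝ) < N - 1)]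
      linarith
    rw [hGReq]
    exact le_trans h2 (mul_le_mul_of_nonneg_right hX
      (div_nonneg (by norm_num) (by linarith)))
  -- existence of root of G = 1
  obtain ⟨κ0, hκ0mem, hκ0G⟩ : ∃ κ0 ∈ Set.Icc 1 R, G κ0 = 1 := by
    have := intermediate_value_Icc hR1.le hcont
    have h1 : (1:ℝ) ∈ Set.Icc (G 1) (G R) := ⟨by rw [hG1]; norm_num, hGR⟩
    obtain ⟨κ0, hm, he⟩ := this h1
    exact ⟨κ0, hm, he⟩
  -- equation equivalence
  have key : ∀ κ : ℝ, κ ∈ Set.Icc 1 R →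
      (((N - 1 + κ ^ 2) ^ a * (κ ^ 2 - 1) = κ ^ n) ↔ G κ = 1) := by
    intro κ hκ
    have hκ0 : (0:ℝ) < κ := lt_of_lt_of_le one_pos hκ.1
    have hκn : (0:ℝ) < κ ^ n := pow_pos hκ0 n
    have hκN : κ ^ (-N) = (κ ^ n)⁻¹ := by
      rw [Real.rpow_neg hκ0.le, hNdef, Real.rpow_natCast]
    simp only [hGdef]
    rw [hκN, mul_inv_eq_one₀ hκn.ne']
  refine ⟨κ0, ⟨hκ0mem, (key κ0 hκ0mem).mpr hκ0G⟩, ?_⟩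
  rintro y ⟨hymem, hyeq⟩
  exact hmono.injOn hymem hκ0mem (((key y hymem).mp hyeq).trans hκ0G.symm)
end

section
/- Let n ≥ 2 be an integer, let u, v ≥ 0 be real numbers, and let σ ≥ 1 satisfy (σ² + n−1)^{(n−2)/2}·(σ²−1) < σ^n. Set a = (σ² + n−1)^{(n−2)/2}·(σ²−1)/σ^n (so a < 1) and b = n·(σ² + n−1)^{(n−2)/2}/σ. Then (u² + (n−1)v²)^{n/2} ≥ a·u^n + b·u·v^{n−1}, with equality if and only if u = σ·v. -/
/-!
Both sides are homogeneous of degree `n`, so it suffices to take `v = 1`, `u = t`. Writing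
`(t² + n - 1)^{n/2} - a tⁿ = t φ(t)`, one computes `φ'(t) = (n - 1) t^{n-2} (η(1/t²) - a)` with
`η(x) = (1 + (n - 1)x)^{(n-2)/2} (1 - x)`, and `a = η(1/σ²)`. On `x ≥ 0`, `η'` has the sign of
`(n - 3) - (n - 1)x`, so `η` rises from `η(0) = 1` and then decreases; as `a < 1`, `1/σ²` lies on
the decreasing branch and `η(1/t²) - a` changes sign exactly at `t = σ`. Hence `φ` has its strict
minimum `φ(σ) = b` at `σ`, which is the inequality together with its equality case.
-/

open Real Set

namespace MixedPowerBound

noncomputable def eta (c x : ℝ) : ℝ := (1 + (c - 1) * x) ^ ((c - 2) / 2) * (1 - x)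

lemma eta_zero (c : ℝ) : eta c 0 = 1 := by simp [eta]

lemma hasDerivAt_eta {c x : ℝ} (hx : 0 < 1 + (c - 1) * x) :
    HasDerivAt (eta c)
      ((1 + (c - 1) * x) ^ ((c - 2) / 2 - 1) * (c / 2 * ((c - 3) - (c - 1) * x))) x := by
  have hbase : HasDerivAt (fun y ↦ 1 + (c - 1) * y) (c - 1) x := by
    simpa using ((hasDerivAt_id x).const_mul (c - 1)).const_add 1
  refine ((hbase.rpow_const (p := (c - 2) / 2) (Or.inl hx.ne')).mul
    ((hasDerivAt_id x).const_sub 1)).congr_deriv ?_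
  have hsplit : (1 + (c - 1) * x) ^ ((c - 2) / 2)
      = (1 + (c - 1) * x) ^ ((c - 2) / 2 - 1) * (1 + (c - 1) * x) := by
    rw [← rpow_add_one hx.ne']; ring_nf
  rw [hsplit, id_eq]
  ring

section Unimodal

variable {c : ℝ}

lemma eta_strictAntiOn (hc : 1 < c) :
    StrictAntiOn (eta c) (Ici (max 0 ((c - 3) / (c - 1)))) := by
  have hpos : ∀ x, max 0 ((c - 3) / (c - 1)) ≤ x → 0 < 1 + (c - 1) * x := fun x hx ↦ by
    nlinarith [le_of_max_le_left hx]
  refine strictAntiOn_of_deriv_neg (convex_Ici _)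
    (fun x hx ↦ (hasDerivAt_eta (hpos x hx)).continuousAt.continuousWithinAt) fun x hx ↦ ?_
  rw [interior_Ici, mem_Ioi] at hx
  rw [(hasDerivAt_eta (hpos x hx.le)).deriv]
  have hlin : (c - 3) - (c - 1) * x < 0 := by
    have := (div_lt_iff₀ (by linarith)).mp (lt_of_le_of_lt (le_max_right _ _) hx)
    linarith
  exact mul_neg_of_pos_of_neg (rpow_pos_of_pos (hpos x hx.le) _)
    (mul_neg_of_pos_of_neg (by linarith) hlin)

lemma eta_monotoneOn (hc : 1 < c) :
    MonotoneOn (eta c) (Icc 0 (max 0 ((c - 3) / (c - 1)))) := by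
  have hpos : ∀ x, 0 ≤ x → 0 < 1 + (c - 1) * x := fun x hx ↦ by nlinarith
  have hderiv : ∀ x ∈ interior (Icc 0 (max 0 ((c - 3) / (c - 1)))),
      HasDerivAt (eta c) _ x := fun x hx ↦ by
    rw [interior_Icc] at hx
    exact hasDerivAt_eta (hpos x hx.1.le)
  refine monotoneOn_of_deriv_nonneg (convex_Icc _ _)
    (fun x hx ↦ (hasDerivAt_eta (hpos x hx.1)).continuousAt.continuousWithinAt)
    (fun x hx ↦ (hderiv x hx).differentiableAt.differentiableWithinAt) fun x hx ↦ ?_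
  rw [(hderiv x hx).deriv]
  rw [interior_Icc] at hx
  have hlin : 0 ≤ (c - 3) - (c - 1) * x := by
    have hx' : x < (c - 3) / (c - 1) := by
      rcases max_cases (0 : ℝ) ((c - 3) / (c - 1)) with ⟨h, _⟩ | ⟨h, _⟩ <;> rw [h] at hx
      · linarith [hx.1, hx.2]
      · exact hx.2
    have := (lt_div_iff₀ (by linarith)).mp hx'
    linarith
  exact mul_nonneg (rpow_pos_of_pos (hpos x hx.1.le) _).le
    (mul_nonneg (by linarith) hlin)

lemma max_lt_of_eta_lt_one (hc : 1 < c) {x₀ : ℝ} (hx₀ : 0 ≤ x₀) (h : eta c x₀ < 1) :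
    max 0 ((c - 3) / (c - 1)) < x₀ := by
  by_contra! hle
  have := eta_monotoneOn hc ⟨le_rfl, le_max_left _ _⟩ ⟨hx₀, hle⟩ hx₀
  rw [eta_zero] at this
  linarith

lemma eta_lt_of_lt (hc : 1 < c) {x₀ x : ℝ} (hx₀ : 0 ≤ x₀) (h : eta c x₀ < 1)
    (hx : x₀ < x) : eta c x < eta c x₀ :=
  have h₀ := max_lt_of_eta_lt_one hc hx₀ h
  eta_strictAntiOn hc h₀.le (h₀.trans hx).le hx

lemma eta_lt_of_gt (hc : 1 < c) {x₀ x : ℝ} (h : eta c x₀ < 1) (hx₀ : 0 ≤ x)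
    (hx : x < x₀) : eta c x₀ < eta c x := by
  rcases le_or_gt (max 0 ((c - 3) / (c - 1))) x with hmax | hmax
  · exact eta_strictAntiOn hc hmax (hmax.trans hx.le) hx
  · have := eta_monotoneOn hc ⟨le_rfl, le_max_left _ _⟩ ⟨hx₀, hmax.le⟩ hx₀
    rw [eta_zero] at this
    linarith

end Unimodal

lemma eta_inv_sq {n : ℕ} (hn : 1 ≤ n) {t : ℝ} (ht : 0 < t) :
    eta n (t ^ 2)⁻¹ = (t ^ 2 + (n : ℝ) - 1) ^ (((n : ℝ) - 2) / 2) * (t ^ 2 - 1) / t ^ n := by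
  have hn' : (1 : ℝ) ≤ n := by exact_mod_cast hn
  have hB : 0 ≤ t ^ 2 + (n : ℝ) - 1 := by nlinarith [sq_nonneg t]
  have hbase : 1 + ((n : ℝ) - 1) * (t ^ 2)⁻¹ = (t ^ 2 + (n : ℝ) - 1) / t ^ 2 := by
    field_simp; ring
  have hpow : (t ^ 2) ^ (((n : ℝ) - 2) / 2) * t ^ 2 = t ^ n := by
    rw [← rpow_natCast_mul ht.le, ← rpow_natCast, ← rpow_add ht, ← rpow_natCast]
    congr 1; push_cast; ring
  rw [eta, hbase, div_rpow hB (by positivity), ← hpow]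
  field_simp

noncomputable def phi (n : ℕ) (a s : ℝ) : ℝ :=
  (s ^ 2 + (n : ℝ) - 1) ^ ((n : ℝ) / 2) / s - a * s ^ (n - 1)

lemma mul_phi {n : ℕ} (hn : 1 ≤ n) (a : ℝ) {s : ℝ} (hs : s ≠ 0) :
    s * phi n a s = (s ^ 2 + (n : ℝ) - 1) ^ ((n : ℝ) / 2) - a * s ^ n := by
  have hpow : s ^ n = s ^ (n - 1) * s := by rw [← pow_succ, Nat.sub_add_cancel hn]
  rw [phi, mul_sub, mul_div_cancel₀ _ hs, hpow]
  ring

lemma hasDerivAt_phi {n : ℕ} (hn : 2 ≤ n) (a : ℝ) {t : ℝ} (ht : 0 < t) :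
    HasDerivAt (phi n a) (((n : ℝ) - 1) * t ^ (n - 2) * (eta n (t ^ 2)⁻¹ - a)) t := by
  have hn' : (2 : ℝ) ≤ n := by exact_mod_cast hn
  have hB : 0 < t ^ 2 + (n : ℝ) - 1 := by nlinarith
  have hbase : HasDerivAt (fun s : ℝ ↦ s ^ 2 + (n : ℝ) - 1) (2 * t) t := by
    simpa using ((hasDerivAt_pow 2 t).add_const (n : ℝ)).sub_const 1
  have hmono : HasDerivAt (fun s : ℝ ↦ a * s ^ (n - 1)) (a * (((n : ℝ) - 1) * t ^ (n - 2))) t := by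
    have := (hasDerivAt_pow (n - 1) t).const_mul a
    rwa [Nat.cast_sub (by omega), Nat.cast_one, show n - 1 - 1 = n - 2 by omega] at this
  refine (((hbase.rpow_const (p := (n : ℝ) / 2) (Or.inl hB.ne')).div (hasDerivAt_id t)
    ht.ne').sub hmono).congr_deriv ?_
  have hsplit : (t ^ 2 + (n : ℝ) - 1) ^ ((n : ℝ) / 2)
      = (t ^ 2 + (n : ℝ) - 1) ^ (((n : ℝ) - 2) / 2) * (t ^ 2 + (n : ℝ) - 1) := by
    rw [← rpow_add_one hB.ne']; ring_nf
  have htn : t ^ n = t ^ (n - 2) * t ^ 2 := by rw [← pow_add, Nat.sub_add_cancel hn]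
  rw [eta_inv_sq (by omega) ht, hsplit, show (n : ℝ) / 2 - 1 = ((n : ℝ) - 2) / 2 by ring,
    htn, id_eq]
  field_simp
  ring

section Minimum

variable {n : ℕ} {σ : ℝ}

lemma phi_strictAntiOn (hn : 2 ≤ n) (hσ : 0 < σ) (ha : eta n (σ ^ 2)⁻¹ < 1) :
    StrictAntiOn (phi n (eta n (σ ^ 2)⁻¹)) (Ioc 0 σ) := by
  have hn' : (1 : ℝ) < n := by exact_mod_cast hn
  refine strictAntiOn_of_deriv_neg (convex_Ioc _ _)
    (fun s hs ↦ (hasDerivAt_phi hn _ hs.1).continuousAt.continuousWithinAt) fun s hs ↦ ?_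
  rw [interior_Ioc] at hs
  rw [(hasDerivAt_phi hn _ hs.1).deriv]
  have hinv : (σ ^ 2)⁻¹ < (s ^ 2)⁻¹ := by
    have := hs.1
    gcongr
    exact hs.2
  have heta := eta_lt_of_lt hn' (by positivity) ha hinv
  have := pow_pos hs.1 (n - 2)
  exact mul_neg_of_pos_of_neg (by positivity) (by linarith)

lemma phi_strictMonoOn (hn : 2 ≤ n) (hσ : 0 < σ) (ha : eta n (σ ^ 2)⁻¹ < 1) :
    StrictMonoOn (phi n (eta n (σ ^ 2)⁻¹)) (Ici σ) := by
  have hn' : (1 : ℝ) < n := by exact_mod_cast hn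
  refine strictMonoOn_of_deriv_pos (convex_Ici _)
    (fun s hs ↦ (hasDerivAt_phi hn _ (hσ.trans_le hs)).continuousAt.continuousWithinAt)
    fun s hs ↦ ?_
  rw [interior_Ici, mem_Ioi] at hs
  have hs0 := hσ.trans hs
  rw [(hasDerivAt_phi hn _ hs0).deriv]
  have hinv : (s ^ 2)⁻¹ < (σ ^ 2)⁻¹ := by gcongr
  have heta := eta_lt_of_gt hn' ha (by positivity) hinv
  have := pow_pos hs0 (n - 2)
  exact mul_pos (by nlinarith) (by linarith)

lemma phi_lt_phi (hn : 2 ≤ n) (hσ : 0 < σ) (ha : eta n (σ ^ 2)⁻¹ < 1) {t : ℝ} (ht : 0 < t)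
    (hne : t ≠ σ) : phi n (eta n (σ ^ 2)⁻¹) σ < phi n (eta n (σ ^ 2)⁻¹) t := by
  rcases hne.lt_or_gt with hlt | hgt
  · exact phi_strictAntiOn hn hσ ha ⟨ht, hlt.le⟩ ⟨hσ, le_rfl⟩ hlt
  · exact phi_strictMonoOn hn hσ ha self_mem_Ici hgt.le hgt

lemma phi_eta_inv_sq (hn : 1 ≤ n) (hσ : 0 < σ) :
    phi n (eta n (σ ^ 2)⁻¹) σ = n * (σ ^ 2 + (n : ℝ) - 1) ^ (((n : ℝ) - 2) / 2) / σ := by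
  have hB : 0 < σ ^ 2 + (n : ℝ) - 1 := by
    have : (1 : ℝ) ≤ n := by exact_mod_cast hn
    nlinarith
  have hsplit : (σ ^ 2 + (n : ℝ) - 1) ^ ((n : ℝ) / 2)
      = (σ ^ 2 + (n : ℝ) - 1) ^ (((n : ℝ) - 2) / 2) * (σ ^ 2 + (n : ℝ) - 1) := by
    rw [← rpow_add_one hB.ne']; ring_nf
  rw [eq_div_iff hσ.ne', mul_comm, mul_phi hn _ hσ.ne', eta_inv_sq hn hσ, hsplit]
  field_simp
  ring

lemma lt_rpow_of_ne (hn : 2 ≤ n) (hσ : 0 < σ) (ha : eta n (σ ^ 2)⁻¹ < 1) {t : ℝ} (ht : 0 ≤ t)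
    (hne : t ≠ σ) :
    eta n (σ ^ 2)⁻¹ * t ^ n + phi n (eta n (σ ^ 2)⁻¹) σ * t
      < (t ^ 2 + (n : ℝ) - 1) ^ ((n : ℝ) / 2) := by
  have hn' : (2 : ℝ) ≤ n := by exact_mod_cast hn
  rcases ht.eq_or_lt with rfl | ht
  · have hpos : (0 : ℝ) < 0 ^ 2 + (n : ℝ) - 1 := by linarith
    rw [zero_pow (by omega), mul_zero, mul_zero, add_zero]
    exact rpow_pos_of_pos hpos _
  · have := mul_lt_mul_of_pos_left (phi_lt_phi hn hσ ha ht hne) ht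
    rw [mul_phi (by omega) _ ht.ne'] at this
    linarith

end Minimum

lemma rpow_sq_add_mul_sq {n : ℕ} {v : ℝ} (hv : 0 ≤ v) {t : ℝ} (hB : 0 ≤ t ^ 2 + (n : ℝ) - 1) :
    ((t * v) ^ 2 + ((n : ℝ) - 1) * v ^ 2) ^ ((n : ℝ) / 2)
      = v ^ n * (t ^ 2 + (n : ℝ) - 1) ^ ((n : ℝ) / 2) := by
  rw [show (t * v) ^ 2 + ((n : ℝ) - 1) * v ^ 2 = v ^ 2 * (t ^ 2 + (n : ℝ) - 1) by ring,
    mul_rpow (by positivity) hB, ← rpow_natCast_mul hv, ← rpow_natCast v n]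
  congr 2
  push_cast
  ring

section Homogeneous

variable {n : ℕ} {σ u v : ℝ}

lemma rpow_eq_of_eq_mul (hn : 1 ≤ n) (hσ : σ ≠ 0) (a : ℝ) (hv : 0 ≤ v) :
    ((σ * v) ^ 2 + ((n : ℝ) - 1) * v ^ 2) ^ ((n : ℝ) / 2)
      = a * (σ * v) ^ n + phi n a σ * (σ * v * v ^ (n - 1)) := by
  have hB : 0 ≤ σ ^ 2 + (n : ℝ) - 1 := by
    have : (1 : ℝ) ≤ n := by exact_mod_cast hn
    nlinarith
  have hσφ := mul_phi hn a hσ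
  have hvn : v * v ^ (n - 1) = v ^ n := by rw [← pow_succ', Nat.sub_add_cancel hn]
  rw [rpow_sq_add_mul_sq hv hB, mul_pow, mul_assoc σ, hvn]
  linear_combination -(v ^ n) * hσφ

lemma lt_rpow_of_ne_mul (hn : 2 ≤ n) (hσ : 0 < σ) (ha : eta n (σ ^ 2)⁻¹ < 1) (hu : 0 ≤ u)
    (hv : 0 ≤ v) (hne : u ≠ σ * v) :
    eta n (σ ^ 2)⁻¹ * u ^ n + phi n (eta n (σ ^ 2)⁻¹) σ * (u * v ^ (n - 1))
      < (u ^ 2 + ((n : ℝ) - 1) * v ^ 2) ^ ((n : ℝ) / 2) := by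
  rcases hv.eq_or_lt with rfl | hv
  · have hu : 0 < u := hu.lt_of_ne' (by simpa using hne)
    have hun := pow_pos hu n
    rw [zero_pow (n := n - 1) (by omega), zero_pow two_ne_zero, mul_zero, mul_zero, add_zero,
      mul_zero, add_zero,
      ← rpow_natCast_mul hu.le, show ((2 : ℕ) : ℝ) * (n / 2) = n by push_cast; ring,
      rpow_natCast]
    nlinarith
  · obtain ⟨t, rfl⟩ : ∃ t, u = t * v := ⟨u / v, (div_mul_cancel₀ u hv.ne').symm⟩
    have ht : 0 ≤ t := nonneg_of_mul_nonneg_left hu hv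
    have hB : 0 ≤ t ^ 2 + (n : ℝ) - 1 := by
      have : (1 : ℝ) ≤ n := by exact_mod_cast (by omega : 1 ≤ n)
      nlinarith
    have hvn : v * v ^ (n - 1) = v ^ n := by rw [← pow_succ', Nat.sub_add_cancel (by omega)]
    have key := mul_lt_mul_of_pos_left
      (lt_rpow_of_ne hn hσ ha ht fun h ↦ hne (by rw [h])) (pow_pos hv n)
    rw [rpow_sq_add_mul_sq hv.le hB, mul_pow, mul_assoc t, hvn]
    linarith

end Homogeneous

end MixedPowerBound

open MixedPowerBound in
/-- Lemma 3.7. For `u, v ≥ 0` and `σ ≥ 1` with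
`a = (σ² + n - 1)^{(n-2)/2}(σ² - 1)/σⁿ < 1` and `b = n(σ² + n - 1)^{(n-2)/2}/σ`,
one has `(u² + (n-1)v²)^{n/2} ≥ a uⁿ + b u v^{n-1}`, with equality iff `u = σv`. -/
theorem stmt12 (n : ℕ) (hn : 2 ≤ n) (u v σ : ℝ)
    (hu : 0 ≤ u) (hv : 0 ≤ v) (hσ : 1 ≤ σ)
    (ha : (σ ^ 2 + (n : ℝ) - 1) ^ (((n : ℝ) - 2) / 2) * (σ ^ 2 - 1) < σ ^ n) :
    (σ ^ 2 + (n : ℝ) - 1) ^ (((n : ℝ) - 2) / 2) * (σ ^ 2 - 1) / σ ^ n * u ^ n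
        + (n : ℝ) * (σ ^ 2 + (n : ℝ) - 1) ^ (((n : ℝ) - 2) / 2) / σ * (u * v ^ (n - 1))
      ≤ (u ^ 2 + ((n : ℝ) - 1) * v ^ 2) ^ ((n : ℝ) / 2) ∧
    ((u ^ 2 + ((n : ℝ) - 1) * v ^ 2) ^ ((n : ℝ) / 2)
        = (σ ^ 2 + (n : ℝ) - 1) ^ (((n : ℝ) - 2) / 2) * (σ ^ 2 - 1) / σ ^ n * u ^ n
          + (n : ℝ) * (σ ^ 2 + (n : ℝ) - 1) ^ (((n : ℝ) - 2) / 2) / σ * (u * v ^ (n - 1))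
      ↔ u = σ * v) := by
  have hσ0 : 0 < σ := by linarith
  have ha' : eta n (σ ^ 2)⁻¹ < 1 := by
    rwa [eta_inv_sq (by omega) hσ0, div_lt_one (by positivity)]
  rw [← eta_inv_sq (by omega) hσ0, ← phi_eta_inv_sq (by omega) hσ0]
  have hlt := fun hne ↦ lt_rpow_of_ne_mul hn hσ0 ha' hu hv hne
  refine ⟨?_, fun heq ↦ by_contra fun hne ↦ (hlt hne).ne' heq, ?_⟩
  · rcases eq_or_ne u (σ * v) with rfl | hne
    · exact (rpow_eq_of_eq_mul (by omega) hσ0.ne' _ hv).ge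
    · exact (hlt hne).le
  · rintro rfl
    exact rpow_eq_of_eq_mul (by omega) hσ0.ne' _ hv
end

section
/- Let λ > 0 and let n ≥ 2 be an integer. Then ∫_0^π ( 2λ/(1 + λ² + (1 − λ²)·cos θ) )^{n−1} · (sin θ)^{n−2} dθ = ∫_0^π (sin θ)^{n−2} dθ. -/
/-!
In meridian coordinates `Φ^λ` sends the point of polar angle `θ` to the point of polar angle
`φ θ = arccos (((1 + λ²) cos θ + 1 - λ²) / D θ)`, where `D θ = 1 + λ² + (1 - λ²) cos θ`.
A direct computation gives `sin (φ θ) = (2λ / D θ) sin θ` and `φ' θ = 2λ / D θ`, so the integrand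
is `φ' θ · sin (φ θ) ^ (n - 2)`; as `φ` maps `[0, π]` onto itself fixing the endpoints, the
substitution `u = φ θ` turns the left side into the right side.
-/

open Real Set

noncomputable section

namespace SphericalHomothety

def denom (lam θ : ℝ) : ℝ := 1 + lam ^ 2 + (1 - lam ^ 2) * cos θ

def conformalFactor (lam θ : ℝ) : ℝ := 2 * lam / denom lam θ

def cosAngle (lam θ : ℝ) : ℝ := ((1 + lam ^ 2) * cos θ + (1 - lam ^ 2)) / denom lam θ

def angle (lam θ : ℝ) : ℝ := arccos (cosAngle lam θ)

variable {lam : ℝ}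

theorem denom_pos (hlam : lam ≠ 0) (θ : ℝ) : 0 < denom lam θ := by
  have hl2 : 0 < lam ^ 2 := by positivity
  have h1 := neg_one_le_cos θ
  have h2 := cos_le_one θ
  unfold denom
  nlinarith [mul_nonneg hl2.le (by linarith : (0:ℝ) ≤ 1 - cos θ)]

theorem one_sub_cosAngle_sq (hlam : lam ≠ 0) (θ : ℝ) :
    1 - cosAngle lam θ ^ 2 = (conformalFactor lam θ * sin θ) ^ 2 := by
  have hD := (denom_pos hlam θ).ne'
  unfold cosAngle conformalFactor at *
  field_simp
  unfold denom
  linear_combination (-4 * lam ^ 2) * sin_sq_add_cos_sq θ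

theorem sin_angle (hlam : 0 < lam) {θ : ℝ} (hθ : 0 ≤ sin θ) :
    sin (angle lam θ) = conformalFactor lam θ * sin θ := by
  have hc : 0 ≤ conformalFactor lam θ :=
    div_nonneg (by positivity) (denom_pos hlam.ne' θ).le
  rw [angle, sin_arccos, one_sub_cosAngle_sq hlam.ne', sqrt_sq (mul_nonneg hc hθ)]

theorem hasDerivAt_cosAngle (hlam : lam ≠ 0) (θ : ℝ) :
    HasDerivAt (cosAngle lam) (-(conformalFactor lam θ ^ 2 * sin θ)) θ := by
  have hD := (denom_pos hlam θ).ne'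
  have hN : HasDerivAt (fun θ => (1 + lam ^ 2) * cos θ + (1 - lam ^ 2))
      (-((1 + lam ^ 2) * sin θ)) θ := by
    simpa using ((hasDerivAt_cos θ).const_mul (1 + lam ^ 2)).add_const (1 - lam ^ 2)
  have hDen : HasDerivAt (denom lam) (-((1 - lam ^ 2) * sin θ)) θ := by
    unfold denom
    simpa using ((hasDerivAt_cos θ).const_mul (1 - lam ^ 2)).const_add (1 + lam ^ 2)
  refine (hN.div hDen hD).congr_deriv ?_
  unfold conformalFactor
  field_simp
  unfold denom
  ring

theorem hasDerivAt_angle (hlam : 0 < lam) {θ : ℝ} (hθ : θ ∈ Ioo 0 π) :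
    HasDerivAt (angle lam) (conformalFactor lam θ) θ := by
  have hs : 0 < sin θ := sin_pos_of_pos_of_lt_pi hθ.1 hθ.2
  have hc : 0 < conformalFactor lam θ := div_pos (by positivity) (denom_pos hlam.ne' θ)
  have hsq : 0 < 1 - cosAngle lam θ ^ 2 := by
    rw [one_sub_cosAngle_sq hlam.ne']; positivity
  have harccos := (hasDerivAt_arccos (by nlinarith) (by nlinarith)).comp θ
    (hasDerivAt_cosAngle hlam.ne' θ)
  refine harccos.congr_deriv ?_
  rw [one_sub_cosAngle_sq hlam.ne', sqrt_sq (by positivity)]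
  field_simp

theorem continuous_conformalFactor (hlam : lam ≠ 0) : Continuous (conformalFactor lam) :=
  continuous_const.div (by unfold denom; fun_prop) fun θ => (denom_pos hlam θ).ne'

theorem continuous_angle (hlam : lam ≠ 0) : Continuous (angle lam) :=
  continuous_arccos.comp <|
    (by fun_prop : Continuous fun θ => (1 + lam ^ 2) * cos θ + (1 - lam ^ 2)).div
      (by unfold denom; fun_prop) fun θ => (denom_pos hlam θ).ne'

theorem angle_zero (lam : ℝ) : angle lam 0 = 0 := by
  simp [angle, cosAngle, denom]

theorem angle_pi (hlam : lam ≠ 0) : angle lam π = π := by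
  have : cosAngle lam π = -1 := by
    rw [cosAngle, div_eq_iff (denom_pos hlam π).ne', denom, cos_pi]
    ring
  rw [angle, this, arccos_neg_one]

theorem integral_conformalFactor_pow_mul_sin_pow (hlam : 0 < lam) (m : ℕ) :
    ∫ θ in (0:ℝ)..π, conformalFactor lam θ ^ (m + 1) * sin θ ^ m
      = ∫ θ in (0:ℝ)..π, sin θ ^ m := by
  have hintegrand : ∀ θ ∈ uIcc 0 π,
      conformalFactor lam θ ^ (m + 1) * sin θ ^ m
        = conformalFactor lam θ • ((fun u => sin u ^ m) ∘ angle lam) θ := by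
    intro θ hθ
    rw [uIcc_of_le pi_pos.le] at hθ
    rw [Function.comp_apply, sin_angle hlam (sin_nonneg_of_nonneg_of_le_pi hθ.1 hθ.2),
      smul_eq_mul]
    ring
  rw [intervalIntegral.integral_congr hintegrand,
    intervalIntegral.integral_deriv_smul_comp'' (continuous_angle hlam.ne').continuousOn
      (fun θ hθ => (hasDerivAt_angle hlam (by simpa [pi_pos.le] using hθ)).hasDerivWithinAt)
      (continuous_conformalFactor hlam.ne').continuousOn (by fun_prop),
    angle_zero, angle_pi hlam.ne']

end SphericalHomothety

end

open SphericalHomothety in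
/-- For `λ > 0` and an integer `n ≥ 2`,
`∫_0^π (2λ/(1 + λ² + (1 - λ²)cos θ))^{n-1} (sin θ)^{n-2} dθ = ∫_0^π (sin θ)^{n-2} dθ`,
i.e. `∫_{S^{n-1}} |DΦ^λ|^{n-1} = ω_{n-1}` for the spherical homothety `Φ^λ`. -/
theorem stmt15 (lam : ℝ) (hlam : 0 < lam) (n : ℕ) (hn : 2 ≤ n) :
    ∫ θ in (0:ℝ)..Real.pi,
        (2 * lam / (1 + lam ^ 2 + (1 - lam ^ 2) * Real.cos θ)) ^ (n - 1)
          * Real.sin θ ^ (n - 2)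
      = ∫ θ in (0:ℝ)..Real.pi, Real.sin θ ^ (n - 2) := by
  obtain ⟨m, rfl⟩ : ∃ m, n = m + 2 := ⟨n - 2, by omega⟩
  exact integral_conformalFactor_pow_mul_sin_pow hlam m
end

section
/- Let n ≥ 4 be an integer and σ > 0. For λ > 0 define F(λ) = ∫_0^π ( σ² + (n−1)·( 2λ/(1 + λ² + (1 − λ²)·cos θ) )² )^{n/2} · (sin θ)^{n−2} dθ. Then F is twice differentiable at λ = 1 with F'(1) = 0, and F''(1) < 0 if and only if (n−3)·σ² > n−1. In particular, λ = 1 is a strict local maximum of F if and only if σ > √((n−1)/(n−3)). -/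
/-!
Write `w(λ, θ) = 2λ / (1 + λ² + (1 - λ²) cos θ)` and `G(x) = (σ² + (n - 1) x²) ^ (n / 2)`.
Differentiating under the integral sign (the integrands are jointly continuous on compact
rectangles), the `k`-th derivative of `F` is the integral against `sinⁿ⁻² θ` of the Faà di Bruno
expression in the `G⁽ʲ⁾ ∘ w` and the `∂ʲw/∂λʲ`. At `λ = 1` the homothety is the identity, so
`w = 1` and every `∂ʲw/∂λʲ` is a polynomial in `c = cos θ`; the moments `∫ cᵏ sinᵐ θ dθ` follow
from Wallis' recursion. This gives `F'(1) = 0`, `F''(1) = C ((n - 1) - (n - 3) σ²)` with `C > 0`,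
and `F'''(1) = -3 F''(1)` (a trace of the symmetry `F(λ) = F(1/λ)`). Off the critical value the
sign of `F''(1)` decides; at `(n - 3) σ² = n - 1` one finds `F''''(1) > 0`, so `λ = 1` is then a
strict local minimum.
-/

open Real Set Filter Topology intervalIntegral Function

section DerivativeTest

variable {f f' : ℝ → ℝ} {a d : ℝ}

theorem HasDerivAt.eventually_nhdsGT_lt (hf : HasDerivAt f d a) (hd : 0 < d) :
    ∀ᶠ x in 𝓝[>] a, f a < f x := by
  have hslope := (hasDerivAt_iff_tendsto_slope.mp hf).mono_left (nhdsGT_le_nhdsNE a)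
  filter_upwards [hslope.eventually (eventually_gt_nhds hd), self_mem_nhdsWithin]
    with x hx hax using (slope_pos_iff hax).mp hx

theorem HasDerivAt.eventually_nhdsLT_lt (hf : HasDerivAt f d a) (hd : 0 < d) :
    ∀ᶠ x in 𝓝[<] a, f x < f a := by
  have hslope := (hasDerivAt_iff_tendsto_slope.mp hf).mono_left (nhdsLT_le_nhdsNE a)
  filter_upwards [hslope.eventually (eventually_gt_nhds hd), self_mem_nhdsWithin]
    with x hx hxa using (slope_pos_iff_gt hxa).mp hx

theorem eventually_nhdsGT_lt_of_hasDerivAt (hf : ∀ᶠ x in 𝓝 a, HasDerivAt f (f' x) x)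
    (hf' : ∀ᶠ x in 𝓝[>] a, 0 < f' x) : ∀ᶠ x in 𝓝[>] a, f a < f x := by
  obtain ⟨⟨l, u⟩, ⟨hla, hau⟩, hlu⟩ := (nhds_basis_Ioo a).mem_iff.mp hf
  obtain ⟨b, hab, hb⟩ := mem_nhdsGT_iff_exists_Ioo_subset.mp hf'
  have hsub : Ico a (min b u) ⊆ Ioo l u := fun x hx =>
    ⟨hla.trans_le hx.1, hx.2.trans_le (min_le_right _ _)⟩
  have hmono : StrictMonoOn f (Ico a (min b u)) := by
    refine strictMonoOn_of_hasDerivWithinAt_pos (convex_Ico _ _) (f' := f')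
      (fun x hx => (hlu (hsub hx)).continuousAt.continuousWithinAt) (fun x hx => ?_) fun x hx => ?_
    all_goals rw [interior_Ico] at hx
    · exact (hlu (hsub (Ioo_subset_Ico_self hx))).hasDerivWithinAt
    · exact hb ⟨hx.1, hx.2.trans_le (min_le_left _ _)⟩
  filter_upwards [Ioo_mem_nhdsGT (lt_min hab hau)] with x hx
  exact hmono (left_mem_Ico.mpr (lt_min hab hau)) (Ioo_subset_Ico_self hx) hx.1

theorem eventually_nhdsLT_lt_of_hasDerivAt (hf : ∀ᶠ x in 𝓝 a, HasDerivAt f (f' x) x)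
    (hf' : ∀ᶠ x in 𝓝[<] a, 0 < f' x) : ∀ᶠ x in 𝓝[<] a, f x < f a := by
  obtain ⟨⟨l, u⟩, ⟨hla, hau⟩, hlu⟩ := (nhds_basis_Ioo a).mem_iff.mp hf
  obtain ⟨b, hba, hb⟩ := mem_nhdsLT_iff_exists_Ioo_subset.mp hf'
  have hsub : Ioc (max b l) a ⊆ Ioo l u := fun x hx =>
    ⟨(le_max_right _ _).trans_lt hx.1, hx.2.trans_lt hau⟩
  have hmono : StrictMonoOn f (Ioc (max b l) a) := by
    refine strictMonoOn_of_hasDerivWithinAt_pos (convex_Ioc _ _) (f' := f')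
      (fun x hx => (hlu (hsub hx)).continuousAt.continuousWithinAt) (fun x hx => ?_) fun x hx => ?_
    all_goals rw [interior_Ioc] at hx
    · exact (hlu (hsub (Ioo_subset_Ioc_self hx))).hasDerivWithinAt
    · exact hb ⟨(le_max_left _ _).trans_lt hx.1, hx.2⟩
  filter_upwards [Ioo_mem_nhdsLT (max_lt hba hla)] with x hx
  exact hmono (Ioo_subset_Ioc_self hx) (right_mem_Ioc.mpr (max_lt hba hla)) hx.2

theorem eventually_nhdsNE_lt_iff_of_hasDerivAt {f₁ f₂ f₃ : ℝ → ℝ}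
    (hf : ∀ᶠ x in 𝓝 a, HasDerivAt f (f₁ x) x) (hf₁ : ∀ᶠ x in 𝓝 a, HasDerivAt f₁ (f₂ x) x)
    (hf₂ : ∀ᶠ x in 𝓝 a, HasDerivAt f₂ (f₃ x) x) (hf₃ : HasDerivAt f₃ d a)
    (h₁ : f₁ a = 0) (h₂ : f₂ a = 0 → f₃ a = 0 ∧ 0 < d) :
    (∀ᶠ x in 𝓝[≠] a, f x < f a) ↔ f₂ a < 0 := by
  constructor
  · intro hmax
    by_contra! h
    have hpos : ∀ᶠ x in 𝓝[>] a, 0 < f₁ x := by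
      rcases h.lt_or_eq with h | h
      · simpa [h₁] using hf₁.self_of_nhds.eventually_nhdsGT_lt h
      · obtain ⟨h₃, hd⟩ := h₂ h.symm
        have h₂pos : ∀ᶠ x in 𝓝[>] a, 0 < f₂ x := by
          simpa [← h] using eventually_nhdsGT_lt_of_hasDerivAt hf₂
            (by simpa [h₃] using hf₃.eventually_nhdsGT_lt hd)
        simpa [h₁] using eventually_nhdsGT_lt_of_hasDerivAt hf₁ h₂pos
    obtain ⟨x, hx, hx'⟩ := ((hmax.filter_mono (nhdsGT_le_nhdsNE a)).and
      (eventually_nhdsGT_lt_of_hasDerivAt hf hpos)).exists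
    exact hx.not_gt hx'
  · intro h
    have hd₁ : HasDerivAt (fun x => -f₁ x) (-f₂ a) a := hf₁.self_of_nhds.neg
    have hleft : ∀ᶠ x in 𝓝[<] a, f x < f a :=
      eventually_nhdsLT_lt_of_hasDerivAt hf
        (by simpa [h₁] using hd₁.eventually_nhdsLT_lt (by linarith))
    have hright : ∀ᶠ x in 𝓝[>] a, -f a < -f x :=
      eventually_nhdsGT_lt_of_hasDerivAt (hf.mono fun x hx => hx.neg)
        (by simpa [h₁] using hd₁.eventually_nhdsGT_lt (by linarith))
    rw [← nhdsLT_sup_nhdsGT, eventually_sup]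
    exact ⟨hleft, hright.mono fun x hx => neg_lt_neg_iff.mp hx⟩

end DerivativeTest

open MeasureTheory in
theorem hasDerivAt_intervalIntegral_of_continuousOn {f f' : ℝ → ℝ → ℝ} {a b p q x₀ : ℝ}
    (hf : ContinuousOn (uncurry f) (Icc p q ×ˢ uIcc a b))
    (hf' : ContinuousOn (uncurry f') (Icc p q ×ˢ uIcc a b))
    (hderiv : ∀ x ∈ Ioo p q, ∀ t ∈ uIcc a b, HasDerivAt (f · t) (f' x t) x)
    (hx₀ : x₀ ∈ Ioo p q) :
    HasDerivAt (fun x => ∫ t in a..b, f x t) (∫ t in a..b, f' x₀ t) x₀ := by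
  have slice : ∀ {g : ℝ → ℝ → ℝ}, ContinuousOn (uncurry g) (Icc p q ×ˢ uIcc a b) →
      ∀ x ∈ Icc p q, ContinuousOn (g x) (uIcc a b) := fun hg x hx =>
    hg.comp (Continuous.prodMk_right x).continuousOn fun t ht => ⟨hx, ht⟩
  have meas : ∀ {g : ℝ → ℝ → ℝ}, ContinuousOn (uncurry g) (Icc p q ×ˢ uIcc a b) →
      ∀ x ∈ Icc p q, AEStronglyMeasurable (g x) (volume.restrict (uIoc a b)) := fun hg x hx =>
    ((slice hg x hx).mono uIoc_subset_uIcc).aestronglyMeasurable measurableSet_uIoc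
  obtain ⟨C, hC⟩ := (isCompact_Icc.prod isCompact_uIcc).exists_bound_of_continuousOn hf'
  refine (hasDerivAt_integral_of_dominated_loc_of_deriv_le (bound := fun _ => C)
    (Ioo_mem_nhds hx₀.1 hx₀.2)
    (eventually_of_mem (Ioo_mem_nhds hx₀.1 hx₀.2) fun x hx => meas hf x (Ioo_subset_Icc_self hx))
    ((slice hf x₀ (Ioo_subset_Icc_self hx₀)).intervalIntegrable)
    (meas hf' x₀ (Ioo_subset_Icc_self hx₀)) ?_ intervalIntegrable_const ?_).2
  · exact ae_of_all _ fun t ht x hx => hC (x, t) ⟨Ioo_subset_Icc_self hx, uIoc_subset_uIcc ht⟩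
  · exact ae_of_all _ fun t ht x hx => hderiv x hx t (uIoc_subset_uIcc ht)

section FaaDiBruno

variable {X : Type*}

/-- Faà di Bruno's formula: the `k`-th derivative of `x ↦ G 0 (u 0 x)` for `k ≤ 4`, when `G j` and
`u j` are the `j`-th derivatives of `G 0` and `u 0`. -/
def faaDiBruno (G : ℕ → ℝ → ℝ) (u : ℕ → X → ℝ) : ℕ → X → ℝ
  | 0, x => G 0 (u 0 x)
  | 1, x => G 1 (u 0 x) * u 1 x
  | 2, x => G 2 (u 0 x) * u 1 x ^ 2 + G 1 (u 0 x) * u 2 x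
  | 3, x => G 3 (u 0 x) * u 1 x ^ 3 + 3 * G 2 (u 0 x) * u 1 x * u 2 x + G 1 (u 0 x) * u 3 x
  | 4, x => G 4 (u 0 x) * u 1 x ^ 4 + 6 * G 3 (u 0 x) * u 1 x ^ 2 * u 2 x
      + G 2 (u 0 x) * (3 * u 2 x ^ 2 + 4 * u 1 x * u 3 x) + G 1 (u 0 x) * u 4 x
  | _, _ => 0

theorem continuousOn_faaDiBruno [TopologicalSpace X] {G : ℕ → ℝ → ℝ} {u : ℕ → X → ℝ}
    {s : Set X} (hG : ∀ j, Continuous (G j)) (hu : ∀ j, ContinuousOn (u j) s) (k : ℕ) :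
    ContinuousOn (faaDiBruno G u k) s := by
  have hGu : ∀ j, ContinuousOn (fun x => G j (u 0 x)) s := fun j => (hG j).comp_continuousOn (hu 0)
  have := hGu 1; have := hGu 2; have := hGu 3; have := hGu 4
  have := hu 1; have := hu 2; have := hu 3; have := hu 4
  match k with
  | 0 => exact hGu 0
  | 1 | 2 | 3 | 4 => unfold faaDiBruno; fun_prop
  | _ + 5 => exact continuousOn_const

theorem hasDerivAt_faaDiBruno {G : ℕ → ℝ → ℝ} {u : ℕ → ℝ → ℝ} {x : ℝ}
    (hG : ∀ j < 4, HasDerivAt (G j) (G (j + 1) (u 0 x)) (u 0 x))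
    (hu : ∀ j < 4, HasDerivAt (u j) (u (j + 1) x) x) {k : ℕ} (hk : k < 4) :
    HasDerivAt (faaDiBruno G u k) (faaDiBruno G u (k + 1) x) x := by
  have hGu : ∀ j < 4, HasDerivAt (fun x => G j (u 0 x)) (G (j + 1) (u 0 x) * u 1 x) x :=
    fun j hj => (hG j hj).comp x (hu 0 (by norm_num))
  have hG0 := hGu 0 (by norm_num); have hG1 := hGu 1 (by norm_num)
  have hG2 := hGu 2 (by norm_num); have hG3 := hGu 3 (by norm_num)
  have hu1 := hu 1 (by norm_num); have hu2 := hu 2 (by norm_num); have hu3 := hu 3 (by norm_num)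
  interval_cases k
  · exact hG0
  · exact (hG1.mul hu1).congr_deriv (by simp only [faaDiBruno]; ring)
  · exact ((hG2.mul (hu1.pow 2)).add (hG1.mul hu2)).congr_deriv
      (by simp only [faaDiBruno, Pi.pow_apply]; push_cast; ring)
  · exact (((hG3.mul (hu1.pow 3)).add (((hG2.const_mul 3).mul hu1).mul hu2)).add
      (hG1.mul hu3)).congr_deriv
      (by simp only [faaDiBruno, Pi.pow_apply, Pi.mul_apply]; push_cast; ring)

theorem faaDiBruno_comp {Y : Type*} (G : ℕ → ℝ → ℝ) (u : ℕ → X → ℝ) (φ : Y → X) (k : ℕ)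
    (y : Y) : faaDiBruno G u k (φ y) = faaDiBruno G (fun j => u j ∘ φ) k y := by
  match k with
  | 0 | 1 | 2 | 3 | 4 | _ + 5 => rfl

end FaaDiBruno

theorem integral_quartic_cos_mul_sin_pow (m : ℕ) (a₀ a₁ a₂ a₃ a₄ : ℝ) :
    ∫ θ in 0..π, (a₀ + a₁ * cos θ + a₂ * cos θ ^ 2 + a₃ * cos θ ^ 3 + a₄ * cos θ ^ 4) * sin θ ^ m
      = (a₀ + a₂ / (m + 2) + 3 * a₄ / ((m + 2) * (m + 4))) * ∫ θ in 0..π, sin θ ^ m := by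
  have hodd : ∀ k, ∫ θ in 0..π, sin θ ^ k * cos θ = 0 := fun k => by
    simpa using integral_sin_pow_mul_cos_pow_odd (a := 0) (b := π) k 0
  have hwallis : ∀ k : ℕ, ∫ θ in 0..π, sin θ ^ (k + 2)
      = (k + 1) / (k + 2) * ∫ θ in 0..π, sin θ ^ k := fun k => by
    simpa using integral_sin_pow (a := 0) (b := π) k
  have hpt : ∀ θ, (a₀ + a₁ * cos θ + a₂ * cos θ ^ 2 + a₃ * cos θ ^ 3 + a₄ * cos θ ^ 4) * sin θ ^ m
      = (a₀ + a₂ + a₄) * sin θ ^ m - (a₂ + 2 * a₄) * sin θ ^ (m + 2) + a₄ * sin θ ^ (m + 2 + 2)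
        + (a₁ + a₃) * (sin θ ^ m * cos θ) - a₃ * (sin θ ^ (m + 2) * cos θ) := fun θ => by
    have h := cos_sq' θ
    have h4 : cos θ ^ 4 = (1 - sin θ ^ 2) ^ 2 := by rw [← h]; ring
    have h3 : cos θ ^ 3 = (1 - sin θ ^ 2) * cos θ := by rw [← h]; ring
    rw [h4, h3, h]; ring
  rw [integral_congr fun θ _ => hpt θ, integral_sub, integral_add, integral_add, integral_sub,
    integral_const_mul, integral_const_mul, integral_const_mul, integral_const_mul,
    integral_const_mul, hodd, hodd, hwallis (m + 2), hwallis m]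
  · push_cast
    field_simp
    ring
  all_goals apply Continuous.intervalIntegrable; fun_prop

noncomputable section

namespace SphericalHomothety

/-- The `j`-th derivative in `λ` of `2λ / (a + bλ²)`, for `j ≤ 4`. With `a = 1 + cos θ` and
`b = 1 - cos θ` this is the conformal factor `|DΦ^λ|` of the spherical homothety. -/
def conformalFactorDeriv (a b : ℝ) : ℕ → ℝ → ℝ
  | 0, l => 2 * l / (a + b * l ^ 2)
  | 1, l => 2 * (a - b * l ^ 2) / (a + b * l ^ 2) ^ 2
  | 2, l => 4 * b * l * (b * l ^ 2 - 3 * a) / (a + b * l ^ 2) ^ 3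
  | 3, l => -12 * b * (a ^ 2 - 6 * a * b * l ^ 2 + b ^ 2 * l ^ 4) / (a + b * l ^ 2) ^ 4
  | 4, l => 48 * b ^ 2 * l * (5 * a ^ 2 - 10 * a * b * l ^ 2 + b ^ 2 * l ^ 4) / (a + b * l ^ 2) ^ 5
  | _, _ => 0

theorem conformalFactor_denom_pos {l : ℝ} (hl : 0 < l) (θ : ℝ) :
    0 < 1 + cos θ + (1 - cos θ) * l ^ 2 := by
  nlinarith [neg_one_le_cos θ, mul_nonneg (sub_nonneg.2 (cos_le_one θ)) (sq_nonneg l),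
    mul_pos hl hl]

theorem hasDerivAt_conformalFactorDeriv {a b l : ℝ} (hl : a + b * l ^ 2 ≠ 0) {j : ℕ}
    (hj : j < 4) :
    HasDerivAt (conformalFactorDeriv a b j) (conformalFactorDeriv a b (j + 1) l) l := by
  have hl' : HasDerivAt (fun l : ℝ => l) 1 l := hasDerivAt_id' l
  have hsq : HasDerivAt (fun l : ℝ => l ^ 2) (2 * l) l := by simpa using hasDerivAt_pow 2 l
  have hl4 : HasDerivAt (fun l : ℝ => l ^ 4) (4 * l ^ 3) l := by simpa using hasDerivAt_pow 4 l
  have hD : HasDerivAt (fun l => a + b * l ^ 2) (b * (2 * l)) l := (hsq.const_mul b).const_add a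
  interval_cases j
  · exact ((hl'.const_mul 2).div hD hl).congr_deriv
      (by simp only [conformalFactorDeriv]; field_simp; ring)
  · exact (((hsq.const_mul b).const_sub a).const_mul 2 |>.div (hD.pow 2)
      (pow_ne_zero 2 hl)).congr_deriv
      (by simp only [conformalFactorDeriv, Pi.pow_apply]; field_simp; ring)
  · exact ((hl'.const_mul (4 * b)).mul ((hsq.const_mul b).sub_const (3 * a)) |>.div (hD.pow 3)
      (pow_ne_zero 3 hl)).congr_deriv
      (by simp only [conformalFactorDeriv, Pi.pow_apply, Pi.mul_apply]; field_simp; ring)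
  · exact ((((hsq.const_mul (6 * a * b)).const_sub (a ^ 2)).add (hl4.const_mul (b ^ 2))).const_mul
      (-12 * b) |>.div (hD.pow 4) (pow_ne_zero 4 hl)).congr_deriv
      (by simp only [conformalFactorDeriv, Pi.pow_apply, Pi.add_apply]; field_simp; ring)

theorem continuousOn_conformalFactorDeriv (j : ℕ) :
    ContinuousOn (fun q : ℝ × ℝ => conformalFactorDeriv (1 + cos q.2) (1 - cos q.2) j q.1)
      (Ioi 0 ×ˢ univ) := by
  have hD : ∀ q ∈ Ioi (0 : ℝ) ×ˢ (univ : Set ℝ), 1 + cos q.2 + (1 - cos q.2) * q.1 ^ 2 ≠ 0 :=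
    fun q hq => (conformalFactor_denom_pos hq.1 q.2).ne'
  match j with
  | 0 => exact ContinuousOn.div (by fun_prop) (by fun_prop) hD
  | 1 | 2 | 3 | 4 =>
    exact ContinuousOn.div (by fun_prop) (by fun_prop) fun q hq => pow_ne_zero _ (hD q hq)
  | _ + 5 => exact continuousOn_const

theorem conformalFactor_one (c : ℝ) : conformalFactorDeriv (1 + c) (1 - c) 0 1 = 1 := by
  simp only [conformalFactorDeriv]; ring

def base (σ N x : ℝ) : ℝ := σ ^ 2 + (N - 1) * x ^ 2

theorem base_pos {σ N : ℝ} (hσ : σ ≠ 0) (hN : 1 ≤ N) (x : ℝ) : 0 < base σ N x := by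
  unfold base; positivity

/-- The `j`-th derivative of `x ↦ (σ² + (N - 1) x²) ^ (N / 2)`, for `j ≤ 4`. -/
def powerDeriv (σ N : ℝ) : ℕ → ℝ → ℝ
  | 0, x => base σ N x ^ (N / 2)
  | 1, x => N * (N - 1) * x * base σ N x ^ (N / 2) / base σ N x
  | 2, x => N * (N - 1) * (base σ N x + (N - 2) * (N - 1) * x ^ 2) * base σ N x ^ (N / 2)
      / base σ N x ^ 2
  | 3, x => N * (N - 1) ^ 2 * (N - 2) * x * (3 * base σ N x + (N - 4) * (N - 1) * x ^ 2)
      * base σ N x ^ (N / 2) / base σ N x ^ 3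
  | 4, x => N * (N - 1) ^ 2 * (N - 2) * (3 * base σ N x ^ 2
      + 6 * (N - 4) * (N - 1) * x ^ 2 * base σ N x + (N - 4) * (N - 6) * (N - 1) ^ 2 * x ^ 4)
      * base σ N x ^ (N / 2) / base σ N x ^ 4
  | _, _ => 0

theorem hasDerivAt_powerDeriv {σ N x : ℝ} (hx : base σ N x ≠ 0) {j : ℕ} (hj : j < 4) :
    HasDerivAt (powerDeriv σ N j) (powerDeriv σ N (j + 1) x) x := by
  have hl' : HasDerivAt (fun x : ℝ => x) 1 x := hasDerivAt_id' x
  have hsq : HasDerivAt (fun x : ℝ => x ^ 2) (2 * x) x := by simpa using hasDerivAt_pow 2 x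
  have hB : HasDerivAt (base σ N) ((N - 1) * (2 * x)) x := (hsq.const_mul (N - 1)).const_add _
  have hR : HasDerivAt (fun x => base σ N x ^ (N / 2))
      (N * (N - 1) * x * base σ N x ^ (N / 2) / base σ N x) x :=
    (hB.rpow_const (Or.inl hx)).congr_deriv (by rw [rpow_sub_one hx]; field_simp)
  interval_cases j
  · exact hR
  · exact ((hl'.const_mul (N * (N - 1))).mul hR |>.div hB hx).congr_deriv
      (by simp only [powerDeriv, Pi.mul_apply]; field_simp; ring)
  · exact (((hB.add (hsq.const_mul ((N - 2) * (N - 1)))).const_mul (N * (N - 1))).mul hR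
      |>.div (hB.pow 2) (pow_ne_zero 2 hx)).congr_deriv
      (by simp only [powerDeriv, Pi.pow_apply, Pi.mul_apply, Pi.add_apply]; field_simp; ring)
  · exact (((hl'.const_mul (N * (N - 1) ^ 2 * (N - 2))).mul
      ((hB.const_mul 3).add (hsq.const_mul ((N - 4) * (N - 1))))).mul hR
      |>.div (hB.pow 3) (pow_ne_zero 3 hx)).congr_deriv
      (by simp only [powerDeriv, Pi.pow_apply, Pi.mul_apply, Pi.add_apply]; field_simp; ring)

theorem continuous_powerDeriv {σ N : ℝ} (hσ : σ ≠ 0) (hN : 1 ≤ N) (j : ℕ) :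
    Continuous (powerDeriv σ N j) := by
  have hB : Continuous (base σ N) := by unfold base; fun_prop
  have hB0 : ∀ x, base σ N x ≠ 0 := fun x => (base_pos hσ hN x).ne'
  have hR : Continuous fun x => base σ N x ^ (N / 2) := hB.rpow_const fun x => Or.inl (hB0 x)
  match j with
  | 0 => exact hR
  | 1 => exact Continuous.div (by fun_prop) hB hB0
  | 2 | 3 | 4 => exact Continuous.div (by fun_prop) (by fun_prop) fun x => pow_ne_zero _ (hB0 x)
  | _ + 5 => exact continuous_const

def integrandDeriv (σ : ℝ) (n k : ℕ) (l θ : ℝ) : ℝ :=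
  faaDiBruno (powerDeriv σ n) (conformalFactorDeriv (1 + cos θ) (1 - cos θ)) k l * sin θ ^ (n - 2)

/-- `phiDeriv σ n 0` is the paper's `ϕ` (the `F` of the theorem, for `λ > 0`) and `phiDeriv σ n k`
its `k`-th derivative, `k ≤ 4`. -/
def phiDeriv (σ : ℝ) (n k : ℕ) (l : ℝ) : ℝ := ∫ θ in 0..π, integrandDeriv σ n k l θ

variable {σ : ℝ} {n : ℕ}

theorem phiDeriv_zero_eq (l : ℝ) : phiDeriv σ n 0 l = ∫ θ in 0..π,
    (σ ^ 2 + ((n : ℝ) - 1) * (2 * l / (1 + l ^ 2 + (1 - l ^ 2) * cos θ)) ^ 2) ^ ((n : ℝ) / 2)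
      * sin θ ^ (n - 2) := by
  refine integral_congr fun θ _ => ?_
  simp only [integrandDeriv, faaDiBruno, powerDeriv, conformalFactorDeriv, base]
  rw [show 1 + l ^ 2 + (1 - l ^ 2) * cos θ = 1 + cos θ + (1 - cos θ) * l ^ 2 by ring]

theorem hasDerivAt_integrandDeriv (hσ : σ ≠ 0) (hn : 1 ≤ n) {k : ℕ} (hk : k < 4) {l : ℝ}
    (hl : 0 < l) (θ : ℝ) :
    HasDerivAt (integrandDeriv σ n k · θ) (integrandDeriv σ n (k + 1) l θ) l :=
  (hasDerivAt_faaDiBruno (G := powerDeriv σ n) (u := conformalFactorDeriv (1 + cos θ) (1 - cos θ))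
    (fun _ hj => hasDerivAt_powerDeriv (base_pos hσ (Nat.one_le_cast.mpr hn) _).ne' hj)
    (fun _ hj => hasDerivAt_conformalFactorDeriv (conformalFactor_denom_pos hl θ).ne' hj)
    hk).mul_const _

theorem continuousOn_integrandDeriv (hσ : σ ≠ 0) (hn : 1 ≤ n) (k : ℕ) :
    ContinuousOn (uncurry (integrandDeriv σ n k)) (Ioi 0 ×ˢ univ) := by
  refine ((continuousOn_faaDiBruno (continuous_powerDeriv hσ (Nat.one_le_cast.mpr hn))
    continuousOn_conformalFactorDeriv k).mul (by fun_prop : Continuous fun q : ℝ × ℝ =>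
      sin q.2 ^ (n - 2)).continuousOn).congr fun q _ => ?_
  exact congrArg (· * sin q.2 ^ (n - 2)) (faaDiBruno_comp _
    (fun j (q : ℝ × ℝ) => conformalFactorDeriv (1 + cos q.2) (1 - cos q.2) j q.1)
    (·, q.2) k q.1).symm

theorem hasDerivAt_phiDeriv (hσ : σ ≠ 0) (hn : 1 ≤ n) {k : ℕ} (hk : k < 4) {l : ℝ}
    (hl : 0 < l) :
    HasDerivAt (phiDeriv σ n k) (phiDeriv σ n (k + 1) l) l := by
  have hK : Icc (l / 2) (2 * l) ×ˢ uIcc 0 π ⊆ Ioi 0 ×ˢ univ :=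
    prod_mono (fun x hx => show 0 < x by linarith [hx.1]) (subset_univ _)
  exact hasDerivAt_intervalIntegral_of_continuousOn
    ((continuousOn_integrandDeriv hσ hn k).mono hK)
    ((continuousOn_integrandDeriv hσ hn (k + 1)).mono hK)
    (fun x hx θ _ => hasDerivAt_integrandDeriv hσ hn hk (by linarith [hx.1]) θ)
    ⟨by linarith, by linarith⟩

theorem phiDeriv_one_eq_of_quartic (hn : 2 ≤ n) {k : ℕ} (a₀ a₁ a₂ a₃ a₄ : ℝ)
    (h : ∀ c, faaDiBruno (powerDeriv σ n) (conformalFactorDeriv (1 + c) (1 - c)) k 1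
      = a₀ + a₁ * c + a₂ * c ^ 2 + a₃ * c ^ 3 + a₄ * c ^ 4) :
    phiDeriv σ n k 1
      = (a₀ + a₂ / n + 3 * a₄ / (n * (n + 2))) * ∫ θ in 0..π, sin θ ^ (n - 2) := by
  have hcast : ((n - 2 : ℕ) : ℝ) + 2 = n := by rw [Nat.cast_sub hn]; ring
  have hpt : ∀ θ, integrandDeriv σ n k 1 θ = (a₀ + a₁ * cos θ + a₂ * cos θ ^ 2 + a₃ * cos θ ^ 3
      + a₄ * cos θ ^ 4) * sin θ ^ (n - 2) := fun θ => congrArg (· * sin θ ^ (n - 2)) (h (cos θ))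
  rw [phiDeriv, integral_congr fun θ _ => hpt θ, integral_quartic_cos_mul_sin_pow, ← hcast]
  ring

theorem phiDeriv_one_one (hn : 2 ≤ n) : phiDeriv σ n 1 1 = 0 := by
  rw [phiDeriv_one_eq_of_quartic hn 0 (powerDeriv σ n 1 1) 0 0 0 fun c => by
    simp only [faaDiBruno, conformalFactor_one]; simp only [conformalFactorDeriv]; ring]
  ring

theorem phiDeriv_two_one (hn : 2 ≤ n) : phiDeriv σ n 2 1
    = (-powerDeriv σ n 1 1 + (powerDeriv σ n 2 1 + 2 * powerDeriv σ n 1 1) / n)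
      * ∫ θ in 0..π, sin θ ^ (n - 2) := by
  rw [phiDeriv_one_eq_of_quartic hn (-powerDeriv σ n 1 1) (-powerDeriv σ n 1 1)
    (powerDeriv σ n 2 1 + 2 * powerDeriv σ n 1 1) 0 0 fun c => by
      simp only [faaDiBruno, conformalFactor_one]; simp only [conformalFactorDeriv]; ring]
  ring

theorem phiDeriv_three_one (hn : 2 ≤ n) : phiDeriv σ n 3 1 = -3 * phiDeriv σ n 2 1 := by
  rw [phiDeriv_two_one hn, phiDeriv_one_eq_of_quartic hn (3 * powerDeriv σ n 1 1)
    (-3 * powerDeriv σ n 2 1 - 3 * powerDeriv σ n 1 1)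
    (-3 * powerDeriv σ n 2 1 - 6 * powerDeriv σ n 1 1)
    (powerDeriv σ n 3 1 + 6 * powerDeriv σ n 2 1 + 6 * powerDeriv σ n 1 1) 0 fun c => by
      simp only [faaDiBruno, conformalFactor_one]; simp only [conformalFactorDeriv]; ring]
  ring

theorem phiDeriv_four_one (hn : 2 ≤ n) : phiDeriv σ n 4 1
    = (3 * powerDeriv σ n 2 1 - 6 * powerDeriv σ n 1 1
      + (-6 * powerDeriv σ n 3 1 - 21 * powerDeriv σ n 2 1 - 6 * powerDeriv σ n 1 1) / n
      + 3 * (powerDeriv σ n 4 1 + 12 * powerDeriv σ n 3 1 + 36 * powerDeriv σ n 2 1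
        + 24 * powerDeriv σ n 1 1) / (n * (n + 2))) * ∫ θ in 0..π, sin θ ^ (n - 2) :=
  phiDeriv_one_eq_of_quartic hn _ (18 * powerDeriv σ n 2 1 + 24 * powerDeriv σ n 1 1) _
    (-6 * powerDeriv σ n 3 1 - 36 * powerDeriv σ n 2 1 - 36 * powerDeriv σ n 1 1) _ fun c => by
      simp only [faaDiBruno, conformalFactor_one]; simp only [conformalFactorDeriv]; ring

theorem phiDeriv_two_one_eq (hσ : σ ≠ 0) (hn : 2 ≤ n) : phiDeriv σ n 2 1
    = (n - 1) * base σ n 1 ^ ((n : ℝ) / 2) / base σ n 1 ^ 2 * (∫ θ in 0..π, sin θ ^ (n - 2))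
      * (n - 1 - (n - 3) * σ ^ 2) := by
  have hN : (2 : ℝ) ≤ n := by exact_mod_cast hn
  have hA : base σ n 1 ≠ 0 := (base_pos hσ (by linarith) 1).ne'
  have hA' : base σ n 1 = σ ^ 2 + (n - 1) := by rw [base]; ring
  rw [phiDeriv_two_one hn]
  simp only [powerDeriv]
  generalize base σ n 1 ^ ((n : ℝ) / 2) = R
  rw [hA'] at hA ⊢
  field_simp
  ring

theorem sign_phiDeriv_two_one (hσ : σ ≠ 0) (hn : 2 ≤ n) :
    SignType.sign (phiDeriv σ n 2 1) = SignType.sign ((n : ℝ) - 1 - (n - 3) * σ ^ 2) := by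
  have hN : (1 : ℝ) < n := by exact_mod_cast (by omega : 1 < n)
  have hA := base_pos hσ hN.le 1
  have hW := integral_sin_pow_pos (n - 2)
  rw [phiDeriv_two_one_eq hσ hn, sign_mul, sign_pos (by positivity), one_mul]

theorem phiDeriv_four_one_pos (hσ : σ ≠ 0) (hn : 4 ≤ n)
    (hcrit : ((n : ℝ) - 3) * σ ^ 2 = n - 1) :
    0 < phiDeriv σ n 4 1 := by
  have hN : (4 : ℝ) ≤ n := by exact_mod_cast hn
  have hA : base σ n 1 = (n - 1) * (n - 2) / (n - 3) := by
    rw [base, eq_div_iff (by linarith)]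
    linear_combination hcrit
  have key : phiDeriv σ n 4 1 = 6 * (n - 3) ^ 2 * (n ^ 2 - 5 * n + 10) / ((n + 2) * (n - 2) ^ 3)
      * base σ n 1 ^ ((n : ℝ) / 2) * ∫ θ in 0..π, sin θ ^ (n - 2) := by
    rw [phiDeriv_four_one (by omega)]
    simp only [powerDeriv]
    generalize base σ n 1 ^ ((n : ℝ) / 2) = R
    have : (n : ℝ) - 3 ≠ 0 := by linarith
    have : (n : ℝ) - 2 ≠ 0 := by linarith
    have : (n : ℝ) - 1 ≠ 0 := by linarith
    rw [hA]
    field_simp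
    ring
  have h3 : 0 < (n : ℝ) - 3 := by linarith
  have h2 : 0 < (n : ℝ) - 2 := by linarith
  have hq : 0 < (n : ℝ) ^ 2 - 5 * n + 10 := by nlinarith
  have hR : 0 < base σ n 1 ^ ((n : ℝ) / 2) := rpow_pos_of_pos (base_pos hσ (by linarith) 1) _
  rw [key]
  have := integral_sin_pow_pos (n - 2)
  positivity

end SphericalHomothety

end

open SphericalHomothety in
/-- For an integer `n ≥ 4` and `σ > 0`, the second-variation function
`F(λ) = ∫_0^π (σ² + (n-1)(2λ/(1 + λ² + (1-λ²)cos θ))²)^{n/2} (sin θ)^{n-2} dθ`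
is twice differentiable at `λ = 1` with `F'(1) = 0`, `F''(1) < 0 ↔ (n-3)σ² > n-1`,
and `λ = 1` is a strict local maximum of `F` iff `σ > √((n-1)/(n-3))`. -/
theorem stmt16 (n : ℕ) (hn : 4 ≤ n) (σ : ℝ) (hσ : 0 < σ)
    (F : ℝ → ℝ)
    (hF : ∀ lam > (0:ℝ), F lam = ∫ θ in (0:ℝ)..Real.pi,
        (σ ^ 2 + ((n : ℝ) - 1) * (2 * lam / (1 + lam ^ 2 + (1 - lam ^ 2) * Real.cos θ)) ^ 2)
            ^ ((n : ℝ) / 2) * Real.sin θ ^ (n - 2)) :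
    ∃ F' : ℝ → ℝ,
      (∀ᶠ lam in nhds (1:ℝ), HasDerivAt F (F' lam) lam) ∧ F' 1 = 0 ∧
      (∃ d2 : ℝ, HasDerivAt F' d2 1 ∧ (d2 < 0 ↔ ((n : ℝ) - 3) * σ ^ 2 > (n : ℝ) - 1)) ∧
      ((∀ᶠ lam in nhdsWithin (1:ℝ) {(1:ℝ)}ᶜ, F lam < F 1)
        ↔ Real.sqrt (((n : ℝ) - 1) / ((n : ℝ) - 3)) < σ) := by
  have hn2 : 2 ≤ n := by omega
  have hderiv : ∀ k < 4, ∀ᶠ l in 𝓝 (1 : ℝ),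
      HasDerivAt (phiDeriv σ n k) (phiDeriv σ n (k + 1) l) l :=
    fun k hk => (lt_mem_nhds one_pos).mono fun l hl => hasDerivAt_phiDeriv hσ.ne' (by omega) hk hl
  have hF' : ∀ᶠ l in 𝓝 (1 : ℝ), HasDerivAt F (phiDeriv σ n 1 l) l := by
    have hFϕ : F =ᶠ[𝓝 1] phiDeriv σ n 0 :=
      (lt_mem_nhds one_pos).mono fun l hl => (hF l hl).trans (phiDeriv_zero_eq l).symm
    filter_upwards [hderiv 0 (by norm_num), hFϕ.eventuallyEq_nhds] with l hl hFl
    exact hl.congr_of_eventuallyEq hFl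
  have hsign := sign_phiDeriv_two_one hσ.ne' hn2
  have hd₂ : phiDeriv σ n 2 1 < 0 ↔ ((n : ℝ) - 3) * σ ^ 2 > n - 1 := by
    rw [← sign_eq_neg_one_iff, hsign, sign_eq_neg_one_iff, sub_neg]
  have hd₄ (h₂ : phiDeriv σ n 2 1 = 0) : phiDeriv σ n 3 1 = 0 ∧ 0 < phiDeriv σ n 4 1 := by
    have hcrit : (n : ℝ) - 1 - (n - 3) * σ ^ 2 = 0 := by
      rwa [← _root_.sign_eq_zero_iff, ← hsign, _root_.sign_eq_zero_iff]
    exact ⟨by rw [phiDeriv_three_one hn2, h₂, mul_zero],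
      phiDeriv_four_one_pos hσ.ne' hn (by linarith)⟩
  have h3 : (0 : ℝ) < n - 3 := by
    have : (4 : ℝ) ≤ n := by exact_mod_cast hn
    linarith
  refine ⟨phiDeriv σ n 1, hF', phiDeriv_one_one hn2,
    ⟨_, (hderiv 1 (by norm_num)).self_of_nhds, hd₂⟩, ?_⟩
  rw [eventually_nhdsNE_lt_iff_of_hasDerivAt hF' (hderiv 1 (by norm_num)) (hderiv 2 (by norm_num))
    (hderiv 3 (by norm_num)).self_of_nhds (phiDeriv_one_one hn2) hd₄, hd₂, sqrt_lt' hσ,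
    div_lt_iff₀ h3, gt_iff_lt, mul_comm]
end

section
/- Let n ≥ 3 be an integer, R > 1, R_* > 1, let ρ be a regular metric on [1,R_*], and let c ∈ ℝ. Suppose H : [1,R] → [1,R_*] is a strictly increasing continuously differentiable diffeomorphism with H(1) = 1 and 𝓛[H](t) = c for all t ∈ [1,R]. Let η_H(t) = t·H'(t)/H(t). Then: if c > 0, then η_H(t) ≤ 1 for all t and η_H is nondecreasing on [1,R]; if c < 0, then η_H(t) ≥ 1 for all t and η_H is nonincreasing on [1,R]; if c = 0, then η_H(t) = 1 for all t, i.e. H(t) = t. -/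
lemma auxAnti (m : ℝ) (hm : 3 ≤ m) :
    StrictAntiOn (fun x : ℝ => (1 - x ^ 2) * (1 + x ^ 2 / (m - 1)) ^ ((m - 2) / 2)) (Set.Ici 0) := by
  have hm1 : (0:ℝ) < m - 1 := by linarith
  have hP : ∀ x : ℝ, (0:ℝ) < 1 + x ^ 2 / (m - 1) := fun x => by positivity
  have hD : ∀ x : ℝ, HasDerivAt (fun x : ℝ => (1 - x ^ 2) * (1 + x ^ 2 / (m - 1)) ^ ((m - 2) / 2))
      ((-(2 * x)) * (1 + x ^ 2 / (m - 1)) ^ ((m - 2) / 2) +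
        (1 - x ^ 2) * ((2 * x / (m - 1)) * ((m - 2) / 2) * (1 + x ^ 2 / (m - 1)) ^ ((m - 2) / 2 - 1))) x := by
    intro x
    have h1 : HasDerivAt (fun x : ℝ => 1 - x ^ 2) (-(2 * x)) x := by
      simpa using ((hasDerivAt_pow 2 x).const_sub 1)
    have h2 : HasDerivAt (fun x : ℝ => 1 + x ^ 2 / (m - 1)) (2 * x / (m - 1)) x := by
      simpa using (((hasDerivAt_pow 2 x).div_const (m - 1)).const_add 1)
    exact h1.mul (h2.rpow_const (Or.inl (hP x).ne'))
  apply strictAntiOn_of_deriv_neg (convex_Ici 0)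
  · exact fun x _ => (hD x).continuousAt.continuousWithinAt
  · intro x hx
    rw [interior_Ici] at hx
    rw [(hD x).deriv]
    have hx0 : (0:ℝ) < x := hx
    have hPx := hP x
    have hsplit : (1 + x ^ 2 / (m - 1)) ^ ((m - 2) / 2)
        = (1 + x ^ 2 / (m - 1)) ^ ((m - 2) / 2 - 1) * (1 + x ^ 2 / (m - 1)) := by
      have h := Real.rpow_add_one hPx.ne' ((m - 2) / 2 - 1)
      rw [sub_add_cancel] at h
      exact h
    rw [hsplit]
    have hQ : 0 < (1 + x ^ 2 / (m - 1)) ^ ((m - 2) / 2 - 1) := Real.rpow_pos_of_pos hPx _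
    have hB : -(2 * x) * (1 + x ^ 2 / (m - 1)) + (1 - x ^ 2) * ((2 * x / (m - 1)) * ((m - 2) / 2))
        = -(x * m * (1 + x ^ 2)) / (m - 1) := by
      field_simp
      ring
    have hBneg : -(2 * x) * (1 + x ^ 2 / (m - 1)) + (1 - x ^ 2) * ((2 * x / (m - 1)) * ((m - 2) / 2)) < 0 := by
      rw [hB]
      have h1 : 0 < x * m * (1 + x ^ 2) := by positivity
      exact div_neg_of_neg_of_pos (neg_neg_of_pos h1) hm1
    nlinarith [mul_neg_of_pos_of_neg hQ hBneg]


/-- Let `H : [1,R] → [1,R_*]` be a strictly increasing `C¹`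
diffeomorphism with `H(1) = 1` and `𝓛[H] ≡ c`, and let `η_H(t) = tH'(t)/H(t)` be its
elasticity. If `c > 0` then `η_H ≤ 1` and `η_H` is nondecreasing; if `c < 0` then
`η_H ≥ 1` and `η_H` is nonincreasing; if `c = 0` then `η_H ≡ 1`, i.e. `H(t) = t`. -/
theorem stmt17 (n : ℕ) (hn : 3 ≤ n) (R Rs : ℝ) (hR : 1 < R) (hRs : 1 < Rs)
    (ρ : ℝ → ℝ) (hρ : IsRegularMetric n Rs ρ) (c : ℝ)
    (H H' : ℝ → ℝ)
    (hH : ∀ t ∈ Set.Icc 1 R, HasDerivWithinAt H (H' t) (Set.Icc 1 R) t)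
    (hH'cont : ContinuousOn H' (Set.Icc 1 R))
    (hH'pos : ∀ t ∈ Set.Icc 1 R, 0 < H' t)
    (hbij : Set.BijOn H (Set.Icc 1 R) (Set.Icc 1 Rs))
    (hH1 : H 1 = 1)
    (hc : ∀ t ∈ Set.Icc 1 R,
      ρ (H t) * ((H t) ^ 2 - t ^ 2 * H' t ^ 2) *
        ((H t) ^ 2 + t ^ 2 * H' t ^ 2 / ((n : ℝ) - 1)) ^ (((n : ℝ) - 2) / 2) = c) :
    (0 < c → (∀ t ∈ Set.Icc 1 R, t * H' t / H t ≤ 1) ∧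
      MonotoneOn (fun t => t * H' t / H t) (Set.Icc 1 R)) ∧
    (c < 0 → (∀ t ∈ Set.Icc 1 R, 1 ≤ t * H' t / H t) ∧
      AntitoneOn (fun t => t * H' t / H t) (Set.Icc 1 R)) ∧
    (c = 0 → ∀ t ∈ Set.Icc 1 R, t * H' t / H t = 1 ∧ H t = t) := by
  have hm3 : (3:ℝ) ≤ (n:ℝ) := by exact_mod_cast hn
  have hm1 : (0:ℝ) < (n:ℝ) - 1 := by linarith
  have htpos : ∀ t ∈ Set.Icc (1:ℝ) R, 0 < t := fun t ht => lt_of_lt_of_le zero_lt_one ht.1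
  have hHpos : ∀ t ∈ Set.Icc (1:ℝ) R, 0 < H t :=
    fun t ht => lt_of_lt_of_le zero_lt_one (hbij.mapsTo ht).1
  have hρpos : ∀ t ∈ Set.Icc (1:ℝ) R, 0 < ρ (H t) := fun t ht => hρ.2.1 _ (hbij.mapsTo ht)
  have hGpos : ∀ t ∈ Set.Icc (1:ℝ) R, 0 < ρ (H t) * H t ^ n :=
    fun t ht => mul_pos (hρpos t ht) (pow_pos (hHpos t ht) n)
  have hηpos : ∀ t ∈ Set.Icc (1:ℝ) R, 0 < t * H' t / H t :=
    fun t ht => div_pos (mul_pos (htpos t ht) (hH'pos t ht)) (hHpos t ht)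
  have hPe : ∀ t ∈ Set.Icc (1:ℝ) R,
      0 < (1 + (t * H' t / H t) ^ 2 / ((n:ℝ) - 1)) ^ (((n:ℝ) - 2) / 2) := fun t ht =>
    Real.rpow_pos_of_pos (add_pos_of_pos_of_nonneg one_pos (div_nonneg (sq_nonneg _) hm1.le)) _
  -- key factorization
  have key : ∀ t ∈ Set.Icc (1:ℝ) R,
      (ρ (H t) * H t ^ n) *
        ((1 - (t * H' t / H t) ^ 2) *
          (1 + (t * H' t / H t) ^ 2 / ((n:ℝ) - 1)) ^ (((n:ℝ) - 2) / 2)) = c := by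
    intro t ht
    have h0 := hc t ht
    have hh := hHpos t ht
    have hsq : t ^ 2 * H' t ^ 2 = (t * H' t / H t) ^ 2 * H t ^ 2 := by
      rw [div_pow, div_mul_cancel₀ _ (pow_ne_zero 2 hh.ne')]; ring
    have h1 : H t ^ 2 - t ^ 2 * H' t ^ 2 = H t ^ 2 * (1 - (t * H' t / H t) ^ 2) := by
      rw [hsq]; ring
    have h2 : H t ^ 2 + t ^ 2 * H' t ^ 2 / ((n:ℝ) - 1)
        = H t ^ 2 * (1 + (t * H' t / H t) ^ 2 / ((n:ℝ) - 1)) := by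
      rw [hsq]; ring
    rw [h1, h2, Real.mul_rpow (by positivity)
      (le_of_lt (add_pos_of_pos_of_nonneg one_pos (div_nonneg (sq_nonneg _) hm1.le)))] at h0
    have h3 : ((H t ^ 2 : ℝ)) ^ (((n:ℝ) - 2) / 2) = H t ^ (n - 2) := by
      rw [← Real.rpow_natCast (H t) 2, ← Real.rpow_mul hh.le, ← Real.rpow_natCast (H t) (n - 2)]
      congr 1
      push_cast [Nat.cast_sub (by omega : 2 ≤ n)]
      ring
    rw [h3] at h0
    have h4 : H t ^ n = H t ^ 2 * H t ^ (n - 2) := by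
      rw [← pow_add]; congr 1; omega
    rw [← h0, h4]; ring
  have hanti := auxAnti (n:ℝ) hm3
  have Hcont : ContinuousOn H (Set.Icc 1 R) := fun t ht => (hH t ht).continuousWithinAt
  have Hmono : MonotoneOn H (Set.Icc 1 R) :=
    (strictMonoOn_of_hasDerivWithinAt_pos (convex_Icc 1 R) Hcont
      (fun x hx => (hH x (interior_subset hx)).mono interior_subset)
      (fun x hx => hH'pos x (interior_subset hx))).monotoneOn
  have hGmono : ∀ s ∈ Set.Icc (1:ℝ) R, ∀ t ∈ Set.Icc (1:ℝ) R, s ≤ t →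
      ρ (H s) * H s ^ n ≤ ρ (H t) * H t ^ n := fun s hs t ht hst =>
    hρ.2.2 (hbij.mapsTo hs) (hbij.mapsTo ht) (Hmono hs ht hst)
  -- sign facts
  have hsign : ∀ t ∈ Set.Icc (1:ℝ) R,
      (0 < c → t * H' t / H t < 1) ∧ (c < 0 → 1 < t * H' t / H t) ∧
      (c = 0 → t * H' t / H t = 1) := by
    intro t ht
    have hk := key t ht
    set a := t * H' t / H t with ha
    have hG := hGpos t ht
    have hP := hPe t ht
    have ha0 := hηpos t ht
    refine ⟨?_, ?_, ?_⟩
    · intro hcpos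
      have h1a : 0 < 1 - a ^ 2 := by
        by_contra h
        push_neg at h
        nlinarith [mul_pos hG hP]
      nlinarith
    · intro hcneg
      have h1a : 1 - a ^ 2 < 0 := by
        by_contra h
        push_neg at h
        nlinarith [mul_pos hG hP]
      nlinarith
    · intro hc0
      rw [hc0] at hk
      have h1a : 1 - a ^ 2 = 0 := by
        rcases mul_eq_zero.1 hk with h | h
        · exact absurd h hG.ne'
        · rcases mul_eq_zero.1 h with h' | h'
          · exact h'
          · exact absurd h' hP.ne'
      have : (a - 1) * (a + 1) = 0 := by nlinarith
      rcases mul_eq_zero.1 this with h | h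
      · linarith
      · linarith
  refine ⟨?_, ?_, ?_⟩
  · -- c > 0
    intro hcpos
    refine ⟨fun t ht => ((hsign t ht).1 hcpos).le, ?_⟩
    intro s hs t ht hst
    by_contra hlt
    push_neg at hlt
    have hf := hanti (hηpos t ht).le (hηpos s hs).le hlt
    simp only at hf
    have ks := key s hs
    have kt := key t ht
    have hGs := hGpos s hs
    have hGt := hGpos t ht
    have hGle := hGmono s hs t ht hst
    have hft : 0 < (1 - (t * H' t / H t) ^ 2) *
        (1 + (t * H' t / H t) ^ 2 / ((n:ℝ) - 1)) ^ (((n:ℝ) - 2) / 2) := by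
      by_contra h
      push_neg at h
      have hnp := mul_nonpos_of_nonneg_of_nonpos hGt.le h
      rw [kt] at hnp
      linarith
    linarith [mul_lt_mul_of_pos_left hf hGs, mul_le_mul_of_nonneg_right hGle hft.le]
  · -- c < 0
    intro hcneg
    refine ⟨fun t ht => ((hsign t ht).2.1 hcneg).le, ?_⟩
    intro s hs t ht hst
    by_contra hlt
    push_neg at hlt
    have hf := hanti (hηpos s hs).le (hηpos t ht).le hlt
    simp only at hf
    have ks := key s hs
    have kt := key t ht
    have hGs := hGpos s hs
    have hGt := hGpos t ht
    have hGle := hGmono s hs t ht hst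
    have hfs : (1 - (s * H' s / H s) ^ 2) *
        (1 + (s * H' s / H s) ^ 2 / ((n:ℝ) - 1)) ^ (((n:ℝ) - 2) / 2) < 0 := by
      by_contra h
      push_neg at h
      have hnn := mul_nonneg hGs.le h
      rw [ks] at hnn
      linarith
    linarith [mul_lt_mul_of_pos_left hf hGt, mul_le_mul_of_nonpos_right hGle hfs.le]
  · -- c = 0
    intro hc0
    have heta : ∀ x ∈ Set.Icc (1:ℝ) R, x * H' x = H x := by
      intro x hx
      have := (hsign x hx).2.2 hc0
      exact (div_eq_one_iff_eq (hHpos x hx).ne').1 this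
    have hφcont : ContinuousOn (fun t => H t / t) (Set.Icc 1 R) :=
      Hcont.div continuousOn_id (fun x hx => (htpos x hx).ne')
    have hφderiv : ∀ x ∈ Set.Ico (1:ℝ) R, HasDerivWithinAt (fun y => H y / y) 0 (Set.Ici x) x := by
      intro x hx
      have hx' : x ∈ Set.Icc (1:ℝ) R := Set.Ico_subset_Icc_self hx
      have hd1 : HasDerivWithinAt H (H' x) (Set.Ici x) x :=
        (hH x hx').mono_of_mem_nhdsWithin (Icc_mem_nhdsGE_of_mem hx)
      have hd2 : HasDerivWithinAt (fun y : ℝ => y) 1 (Set.Ici x) x := hasDerivWithinAt_id x _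
      have hxne : x ≠ 0 := (htpos x hx').ne'
      have hdiv := hd1.div hd2 hxne
      have hnum : (H' x * x - H x * 1) / x ^ 2 = 0 := by
        have h := heta x hx'
        rw [show H' x * x - H x * 1 = x * H' x - H x by ring, h, sub_self, zero_div]
      rwa [hnum] at hdiv
    have hconst := constant_of_has_deriv_right_zero hφcont hφderiv
    intro t ht
    refine ⟨(hsign t ht).2.2 hc0, ?_⟩
    have := hconst t ht
    rw [hH1, div_one] at this
    have htne : t ≠ 0 := (htpos t ht).ne'
    field_simp at this
    exact this
end

section
/- Let n ≥ 3 be an integer, let ρ : (0,∞) → (0,∞) be continuously differentiable, let R > 1, and let H : [1,R] → (0,∞) be twice continuously differentiable with H'(t) > 0 for all t, such that 𝓛[H] is constant on [1,R]. Set η(t) = t·H'(t)/H(t). Then at every t ∈ (1,R) with η(t) ≠ 1 one has n + n·t·(1 + η(t)²)·η'(t) / ( (η(t)² − 1)·(n − 1 + η(t)²) ) + H(t)·ρ'(H(t))/ρ(H(t)) = 0. In particular, if ρ(s) = s^ν for a real ν, then (1 + η(t)²)·η'(t) / ( (1 − η(t)²)·(n − 1 + η(t)²) ) = (n + ν)/(n·t)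 at every such t. -/
/-! Taking the logarithmic derivative of `𝓛[H] = c` gives
`ρ'(H) H' / ρ(H) + U' / U + (n - 2) / 2 · V' / V = 0` for `U = H² - t²H'²` and
`V = H² + t²H'² / (n - 1)`. In terms of the elasticity, `U = H²(1 - η²)`,
`V = H²(n - 1 + η²) / (n - 1)`, `t U' / U = 2η - 2η t η' / (1 - η²)` and
`t V' / V = 2η + 2η t η' / (n - 1 + η²)`. Dividing by `η / t` and using
`(n - 2) / (n - 1 + η²) - 2 / (1 - η²) = n (1 + η²) / ((η² - 1)(n - 1 + η²))` gives the relation;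
for `ρ(s) = s^ν` one has `H ρ'(H) / ρ(H) = ν`. -/

open Filter Topology Set

theorem logDeriv_mul_mul_rpow_eq_zero {f g h : ℝ → ℝ} {f' g' h' p c t : ℝ}
    (hf : HasDerivAt f f' t) (hg : HasDerivAt g g' t) (hh : HasDerivAt h h' t)
    (hf0 : f t ≠ 0) (hg0 : g t ≠ 0) (hh0 : 0 < h t)
    (hconst : (fun s => f s * g s * h s ^ p) =ᶠ[𝓝 t] fun _ => c) :
    f' / f t + g' / g t + p * h' / h t = 0 := by
  have hd := (((hf.mul hg).mul (hh.rpow_const (Or.inl hh0.ne'))).congr_of_eventuallyEq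
    hconst.symm).unique (hasDerivAt_const t c)
  simp only [Pi.mul_apply] at hd
  rw [Real.rpow_sub_one hh0.ne'] at hd
  have := (Real.rpow_pos_of_pos hh0 p).ne'
  field_simp at hd
  rw [mul_zero, mul_eq_zero] at hd
  field_simp
  linear_combination hd.resolve_left this

noncomputable def elasticity (H H' : ℝ → ℝ) (t : ℝ) : ℝ := t * H' t / H t

section

variable {H H' : ℝ → ℝ} {t d η' : ℝ}

theorem hasDerivAt_elasticity (hH : HasDerivAt H (H' t) t) (hH' : HasDerivAt H' d t)
    (ha : H t ≠ 0) :
    HasDerivAt (elasticity H H') (((H' t + t * d) * H t - t * H' t ^ 2) / H t ^ 2) t :=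
  (((hasDerivAt_id t).mul hH').div hH ha).congr_deriv (by simp only [Pi.mul_apply, id]; ring)

theorem hasDerivAt_sq_sub_sq (hH : HasDerivAt H (H' t) t) (hH' : HasDerivAt H' d t)
    (hη : HasDerivAt (elasticity H H') η' t) (ha : H t ≠ 0) (ht : t ≠ 0) :
    HasDerivAt (fun s => H s ^ 2 - s ^ 2 * H' s ^ 2)
      (2 * H t ^ 2 * elasticity H H' t * (1 - elasticity H H' t ^ 2 - t * η') / t) t := by
  rw [hη.unique (hasDerivAt_elasticity hH hH' ha), elasticity]
  refine ((hH.pow 2).sub ((hasDerivAt_pow 2 t).mul (hH'.pow 2))).congr_deriv ?_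
  simp only [Pi.pow_apply]
  field_simp
  ring

theorem hasDerivAt_sq_add_sq_div (n : ℝ) (hH : HasDerivAt H (H' t) t) (hH' : HasDerivAt H' d t)
    (hη : HasDerivAt (elasticity H H') η' t) (ha : H t ≠ 0) (ht : t ≠ 0) (hn : n - 1 ≠ 0) :
    HasDerivAt (fun s => H s ^ 2 + s ^ 2 * H' s ^ 2 / (n - 1))
      (2 * H t ^ 2 * elasticity H H' t * (n - 1 + elasticity H H' t ^ 2 + t * η')
        / ((n - 1) * t)) t := by
  rw [hη.unique (hasDerivAt_elasticity hH hH' ha), elasticity]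
  refine ((hH.pow 2).add (((hasDerivAt_pow 2 t).mul (hH'.pow 2)).div_const _)).congr_deriv ?_
  simp only [Pi.pow_apply]
  field_simp
  ring

end

noncomputable def characteristic (n : ℝ) (ρ H H' : ℝ → ℝ) (t : ℝ) : ℝ :=
  ρ (H t) * (H t ^ 2 - t ^ 2 * H' t ^ 2) * (H t ^ 2 + t ^ 2 * H' t ^ 2 / (n - 1)) ^ ((n - 2) / 2)

theorem elasticity_ode_of_characteristic_eventuallyEq_const {n t c d r' η' : ℝ}
    {ρ H H' : ℝ → ℝ} (hn : 1 < n) (ht : 0 < t) (hρ : HasDerivAt ρ r' (H t))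
    (hρ0 : ρ (H t) ≠ 0) (hH : HasDerivAt H (H' t) t) (hH' : HasDerivAt H' d t)
    (hη : HasDerivAt (elasticity H H') η' t) (ha : 0 < H t) (hb : 0 < H' t)
    (hη1 : elasticity H H' t ≠ 1) (hconst : characteristic n ρ H H' =ᶠ[𝓝 t] fun _ => c) :
    n + n * t * (1 + elasticity H H' t ^ 2) * η'
        / ((elasticity H H' t ^ 2 - 1) * (n - 1 + elasticity H H' t ^ 2))
      + H t * r' / ρ (H t) = 0 := by
  have hn1 : 0 < n - 1 := by linarith
  have hH't : H' t = H t * elasticity H H' t / t := by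
    rw [elasticity]; field_simp
  have hηpos : 0 < elasticity H H' t := by unfold elasticity; positivity
  set η := elasticity H H' t
  have hη2 : 1 - η ^ 2 ≠ 0 := by
    intro h
    exact hη1 (by nlinarith)
  have hU : H t ^ 2 - t ^ 2 * H' t ^ 2 = H t ^ 2 * (1 - η ^ 2) := by
    rw [hH't]; field_simp
  have hV : H t ^ 2 + t ^ 2 * H' t ^ 2 / (n - 1) = H t ^ 2 * (n - 1 + η ^ 2) / (n - 1) := by
    rw [hH't]; field_simp
  have hlog := logDeriv_mul_mul_rpow_eq_zero (hρ.comp t hH)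
    (hasDerivAt_sq_sub_sq hH hH' hη ha.ne' ht.ne')
    (hasDerivAt_sq_add_sq_div n hH hH' hη ha.ne' ht.ne' hn1.ne') hρ0
    (by rw [hU]; exact mul_ne_zero (by positivity) hη2) (by rw [hV]; positivity) hconst
  rw [hU, hV, hH't, Function.comp_apply] at hlog
  have hn2 : n - 1 + η ^ 2 ≠ 0 := by positivity
  have hreduced : H t * r' / ρ (H t) + 2 * (1 - η ^ 2 - t * η') / (1 - η ^ 2)
      + (n - 2) * (n - 1 + η ^ 2 + t * η') / (n - 1 + η ^ 2) = 0 := by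
    refine (mul_eq_zero.mp ?_).resolve_left (div_ne_zero hηpos.ne' ht.ne')
    rw [← hlog]
    field_simp
    ring
  have hη2' : η ^ 2 - 1 ≠ 0 := by contrapose! hη2; linarith
  field_simp at hreduced ⊢
  linear_combination -hreduced

theorem mul_deriv_div_eq_of_eq_rpow {ρ : ℝ → ℝ} {ν a r' : ℝ}
    (hρ : ∀ s ∈ Ioi (0 : ℝ), ρ s = s ^ ν) (hd : HasDerivAt ρ r' a) (ha : 0 < a) :
    a * r' / ρ a = ν := by
  have hpow : HasDerivAt ρ (ν * a ^ (ν - 1)) a :=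
    (Real.hasDerivAt_rpow_const (Or.inl ha.ne')).congr_of_eventuallyEq
      (Filter.mem_of_superset (Ioi_mem_nhds ha) hρ)
  have := (Real.rpow_pos_of_pos ha ν).ne'
  rw [hd.unique hpow, hρ a ha, Real.rpow_sub_one ha.ne']
  field_simp

theorem div_eq_of_add_div_add_eq_zero {n t η η' ν : ℝ} (hn : n ≠ 0) (ht : t ≠ 0)
    (h : n + n * t * (1 + η ^ 2) * η' / ((η ^ 2 - 1) * (n - 1 + η ^ 2)) + ν = 0) :
    (1 + η ^ 2) * η' / ((1 - η ^ 2) * (n - 1 + η ^ 2)) = (n + ν) / (n * t) := by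
  rw [eq_div_iff (mul_ne_zero hn ht), show (1 - η ^ 2) * (n - 1 + η ^ 2)
    = -((η ^ 2 - 1) * (n - 1 + η ^ 2)) by ring, div_neg]
  linear_combination -h

theorem stmt19_general (n : ℕ) (hn : 3 ≤ n) (ρ ρ' : ℝ → ℝ)
    (hρ : ∀ s ∈ Set.Ioi (0:ℝ), HasDerivAt ρ (ρ' s) s)
    (hρpos : ∀ s ∈ Set.Ioi (0:ℝ), 0 < ρ s)
    (R : ℝ) (H H' H'' : ℝ → ℝ)
    (hH : ∀ t ∈ Set.Icc 1 R, HasDerivWithinAt H (H' t) (Set.Icc 1 R) t)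
    (hH' : ∀ t ∈ Set.Icc 1 R, HasDerivWithinAt H' (H'' t) (Set.Icc 1 R) t)
    (hHpos : ∀ t ∈ Set.Icc 1 R, 0 < H t)
    (hH'pos : ∀ t ∈ Set.Icc 1 R, 0 < H' t)
    (c : ℝ)
    (hc : ∀ t ∈ Set.Icc 1 R,
      ρ (H t) * ((H t) ^ 2 - t ^ 2 * H' t ^ 2) *
        ((H t) ^ 2 + t ^ 2 * H' t ^ 2 / ((n : ℝ) - 1)) ^ (((n : ℝ) - 2) / 2) = c) :
    ∀ t ∈ Set.Ioo 1 R, t * H' t / H t ≠ 1 →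
      ((n : ℝ) + (n : ℝ) * t * (1 + (t * H' t / H t) ^ 2)
            * deriv (fun s => s * H' s / H s) t
          / (((t * H' t / H t) ^ 2 - 1) * ((n : ℝ) - 1 + (t * H' t / H t) ^ 2))
        + H t * ρ' (H t) / ρ (H t) = 0) ∧
      ∀ ν : ℝ, (∀ s ∈ Set.Ioi (0:ℝ), ρ s = s ^ ν) →
        (1 + (t * H' t / H t) ^ 2) * deriv (fun s => s * H' s / H s) t
            / ((1 - (t * H' t / H t) ^ 2) * ((n : ℝ) - 1 + (t * H' t / H t) ^ 2))
          = ((n : ℝ) + ν) / ((n : ℝ) * t) := by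
  intro t ht hη1
  have hmem : t ∈ Icc 1 R := Ioo_subset_Icc_self ht
  have hnhds : Icc 1 R ∈ 𝓝 t := Icc_mem_nhds ht.1 ht.2
  have ht0 : 0 < t := by linarith [ht.1]
  have ha := hHpos t hmem
  have hHt := (hH t hmem).hasDerivAt hnhds
  have hH't := (hH' t hmem).hasDerivAt hnhds
  have hη := (hasDerivAt_elasticity hHt hH't ha.ne').differentiableAt.hasDerivAt
  have hode := elasticity_ode_of_characteristic_eventuallyEq_const (n := n) (c := c)
    (by norm_cast; omega) ht0 (hρ _ ha) (hρpos _ ha).ne' hHt hH't hη ha (hH'pos t hmem) hη1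
    (Filter.mem_of_superset hnhds hc)
  refine ⟨hode, fun ν hν => div_eq_of_add_div_add_eq_zero (by positivity) ht0.ne' ?_⟩
  rwa [mul_deriv_div_eq_of_eq_rpow hν (hρ _ ha) ha] at hode

/-- Let `H` be a positive `C²` function on `[1,R]` with `H' > 0` such
that `𝓛[H]` is constant, and let `η(t) = tH'(t)/H(t)`. Then at every interior point with
`η(t) ≠ 1`, `n + n t (1 + η²) η' / ((η² - 1)(n - 1 + η²)) + H ρ'(H)/ρ(H) = 0`; in
particular for `ρ(s) = s^ν`, `(1 + η²) η' / ((1 - η²)(n - 1 + η²)) = (n + ν)/(n t)`. -/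
theorem stmt19 (n : ℕ) (hn : 3 ≤ n) (ρ ρ' : ℝ → ℝ)
    (hρ : ∀ s ∈ Set.Ioi (0:ℝ), HasDerivAt ρ (ρ' s) s)
    (hρ'cont : ContinuousOn ρ' (Set.Ioi 0))
    (hρpos : ∀ s ∈ Set.Ioi (0:ℝ), 0 < ρ s)
    (R : ℝ) (hR : 1 < R) (H H' H'' : ℝ → ℝ)
    (hH : ∀ t ∈ Set.Icc 1 R, HasDerivWithinAt H (H' t) (Set.Icc 1 R) t)
    (hH' : ∀ t ∈ Set.Icc 1 R, HasDerivWithinAt H' (H'' t) (Set.Icc 1 R) t)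
    (hH'cont : ContinuousOn H' (Set.Icc 1 R))
    (hH''cont : ContinuousOn H'' (Set.Icc 1 R))
    (hHpos : ∀ t ∈ Set.Icc 1 R, 0 < H t)
    (hH'pos : ∀ t ∈ Set.Icc 1 R, 0 < H' t)
    (c : ℝ)
    (hc : ∀ t ∈ Set.Icc 1 R,
      ρ (H t) * ((H t) ^ 2 - t ^ 2 * H' t ^ 2) *
        ((H t) ^ 2 + t ^ 2 * H' t ^ 2 / ((n : ℝ) - 1)) ^ (((n : ℝ) - 2) / 2) = c) :
    ∀ t ∈ Set.Ioo 1 R, t * H' t / H t ≠ 1 →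
      ((n : ℝ) + (n : ℝ) * t * (1 + (t * H' t / H t) ^ 2)
            * deriv (fun s => s * H' s / H s) t
          / (((t * H' t / H t) ^ 2 - 1) * ((n : ℝ) - 1 + (t * H' t / H t) ^ 2))
        + H t * ρ' (H t) / ρ (H t) = 0) ∧
      ∀ ν : ℝ, (∀ s ∈ Set.Ioi (0:ℝ), ρ s = s ^ ν) →
        (1 + (t * H' t / H t) ^ 2) * deriv (fun s => s * H' s / H s) t
            / ((1 - (t * H' t / H t) ^ 2) * ((n : ℝ) - 1 + (t * H' t / H t) ^ 2))
          = ((n : ℝ) + ν) / ((n : ℝ) * t) :=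
  stmt19_general n hn ρ ρ' hρ hρpos R H H' H'' hH hH' hHpos hH'pos c hc
end
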